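/- arXiv:1607.05624 — 7 statements merged into one kernel-verified Lean document; each statement's English description precedes it below -/
import Mathlib

section
/- Let U ⊆ Aⁿ be open and let f : U → A be differentiable on U. For b ∈ Aⁿ and j ∈ {1,…,n} let t^b_j : A → Aⁿ be defined by t^b_j(a) = a · e_j + b, where e_j is the j-th standard basis vector. Then f is A-differentiable on U if and only if for every b ∈ Aⁿ and every j ∈ {1,…,n}, the function f ∘ t^b_j : (t^b_j)⁻¹(U) → A is A-differentiable. -/
open Set

/-- `f : B → C` is `A`-differentiable on `U` if it is Fréchet differentiable (over `𝕂`) at every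
point of `U` and its derivative there is `A`-linear. -/
def ADiffOn (𝕂 : Type*) [RCLike 𝕂] (A : Type*) [NormedCommRing A] [NormedAlgebra 𝕂 A]
    {B C : Type*} [NormedAddCommGroup B] [NormedSpace 𝕂 B] [Module A B]
    [NormedAddCommGroup C] [NormedSpace 𝕂 C] [Module A C]
    (f : B → C) (U : Set B) : Prop :=
  ∀ x ∈ U, DifferentiableAt 𝕂 f x ∧
    ∀ (a : A) (y : B), fderiv 𝕂 f x (a • y) = a • fderiv 𝕂 f x y

theorem map_smul_iff_map_smul_pi_single {R ι N F : Type*} {M : ι → Type*} [Monoid R] [Finite ι]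
    [DecidableEq ι] [∀ i, AddCommMonoid (M i)] [∀ i, DistribMulAction R (M i)] [AddCommMonoid N]
    [DistribMulAction R N] [FunLike F (∀ i, M i) N] [AddMonoidHomClass F (∀ i, M i) N] (L : F) :
    (∀ (c : R) (v : ∀ i, M i), L (c • v) = c • L v) ↔
      ∀ (i : ι) (c : R) (y : M i), L (Pi.single i (c • y)) = c • L (Pi.single i y) := by
  refine ⟨fun h i c y => by rw [Pi.single_smul, h], fun h c => ?_⟩
  have hL := AddMonoidHom.functions_ext N
    ((L : (∀ i, M i) →+ N).comp (DistribSMul.toAddMonoidHom _ c))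
    ((DistribSMul.toAddMonoidHom N c).comp L) fun i y => by simpa [Pi.single_smul] using h i c y
  exact DFunLike.congr_fun hL

theorem forall_iff_forall_pi_single_add {ι : Type*} [DecidableEq ι] {M : ι → Type*}
    [∀ i, AddCommGroup (M i)] (P : (∀ i, M i) → ι → Prop) :
    (∀ x j, P x j) ↔ ∀ b j (a : M j), P (Pi.single j a + b) j := by
  refine ⟨fun h b j a => h _ j, fun h x j => ?_⟩
  simpa only [add_sub_cancel] using h (x - Pi.single j (x j)) j (x j)

section Lines

variable {𝕂 : Type*} [RCLike 𝕂] {ι : Type*} [Fintype ι] [DecidableEq ι]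
  {E : Type*} [NormedAddCommGroup E] [NormedSpace 𝕂 E]
  {F : Type*} [NormedAddCommGroup F] [NormedSpace 𝕂 F]

theorem HasFDerivAt.comp_pi_single_add {f : (ι → E) → F} {f' : (ι → E) →L[𝕂] F} {j : ι}
    {a : E} {b : ι → E} (hf : HasFDerivAt f f' (Pi.single j a + b)) :
    HasFDerivAt (fun a => f (Pi.single j a + b))
      (f'.comp (ContinuousLinearMap.single 𝕂 (fun _ => E) j)) a :=
  hf.comp a <|
    (hasFDerivAt_add_const_iff b).2 (ContinuousLinearMap.single 𝕂 (fun _ => E) j).hasFDerivAt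

variable (A : Type*) [NormedCommRing A] [NormedAlgebra 𝕂 A] [Module A E] [Module A F]

theorem aDiffOn_comp_pi_single_add_iff {f : (ι → E) → F} {U : Set (ι → E)}
    (hf : ∀ x ∈ U, DifferentiableAt 𝕂 f x) (j : ι) (b : ι → E) :
    ADiffOn 𝕂 A (fun a => f (Pi.single j a + b)) ((fun a => Pi.single j a + b) ⁻¹' U) ↔
      ∀ a, Pi.single j a + b ∈ U → ∀ (c : A) (y : E),
        fderiv 𝕂 f (Pi.single j a + b) (Pi.single j (c • y)) =
          c • fderiv 𝕂 f (Pi.single j a + b) (Pi.single j y) := by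
  refine forall₂_congr fun a ha => ?_
  have hline := (hf _ ha).hasFDerivAt.comp_pi_single_add
  simp only [hline.differentiableAt, hline.fderiv, true_and, ContinuousLinearMap.comp_apply,
    ContinuousLinearMap.single_apply]

end Lines

theorem aDiff_iff_aDiff_on_lines_general
    (𝕂 : Type*) [RCLike 𝕂]
    (A : Type*) [NormedCommRing A] [NormedAlgebra 𝕂 A]
    (n : ℕ) (U : Set (Fin n → A))
    (f : (Fin n → A) → A) (hf : ∀ x ∈ U, DifferentiableAt 𝕂 f x) :
    ADiffOn 𝕂 A f U ↔
      ∀ (b : Fin n → A) (j : Fin n),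
        ADiffOn 𝕂 A (fun a : A => f (Pi.single j a + b))
          ((fun a : A => Pi.single j a + b) ⁻¹' U) := by
  simp only [aDiffOn_comp_pi_single_add_iff A hf]
  calc ADiffOn 𝕂 A f U
      ↔ ∀ x ∈ U, ∀ (c : A) (v : Fin n → A), fderiv 𝕂 f x (c • v) = c • fderiv 𝕂 f x v :=
        forall₂_congr fun x hx => and_iff_right (hf x hx)
    _ ↔ ∀ x (j : Fin n), x ∈ U → ∀ (c y : A),
          fderiv 𝕂 f x (Pi.single j (c • y)) = c • fderiv 𝕂 f x (Pi.single j y) := by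
        simp only [map_smul_iff_map_smul_pi_single]
        exact ⟨fun h x j hx => h x hx j, fun h x hx j => h x j hx⟩
    _ ↔ _ := forall_iff_forall_pi_single_add _

/-- A differentiable function `f : U → A` on an open `U ⊆ Aⁿ` is `A`-differentiable iff it is
`A`-differentiable along every `A`-line `t^b_j : a ↦ a · e_j + b`. -/
theorem aDiff_iff_aDiff_on_lines
    (𝕂 : Type*) [RCLike 𝕂]
    (A : Type*) [NormedCommRing A] [NormedAlgebra 𝕂 A] [FiniteDimensional 𝕂 A]
    (n : ℕ) (U : Set (Fin n → A)) (hU : IsOpen U)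
    (f : (Fin n → A) → A) (hf : ∀ x ∈ U, DifferentiableAt 𝕂 f x) :
    ADiffOn 𝕂 A f U ↔
      ∀ (b : Fin n → A) (j : Fin n),
        ADiffOn 𝕂 A (fun a : A => f (Pi.single j a + b))
          ((fun a : A => Pi.single j a + b) ⁻¹' U) :=
  aDiff_iff_aDiff_on_lines_general 𝕂 A n U f hf
end

section
/- Let U ⊆ A be open and simply connected and let f : U → A be continuous. The following are equivalent: (i) ∫₀¹ f(γ(t)) · γ'(t) dt = 0 for every smooth closed curve γ in U; (ii) there exists an A-differentiable function g : U → A of class C¹ such that Dg(b)(x) = x · f(b) for all b ∈ U and x ∈ A. -/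
set_option linter.unusedSectionVars false
set_option maxHeartbeats 1000000

open Set intervalIntegral

namespace AContPrim

lemma st_symm (x : ℝ) : Real.smoothTransition (1 - x) = 1 - Real.smoothTransition x := by
  have h := Real.smoothTransition.pos_denom x
  have key : expNegInvGlue (1 - x) / (expNegInvGlue (1 - x) + expNegInvGlue x)
      + expNegInvGlue x / (expNegInvGlue x + expNegInvGlue (1 - x)) = 1 := by
    rw [add_comm (expNegInvGlue (1 - x)), ← add_div, add_comm, div_self h.ne']
  unfold Real.smoothTransition
  rw [sub_sub_cancel]
  linarith

noncomputable def psi (t : ℝ) : ℝ := Real.smoothTransition (3 * t - 1)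

lemma psi_contDiff : ContDiff ℝ (⊤ : ℕ∞) psi :=
  Real.smoothTransition.contDiff.comp ((contDiff_const.mul contDiff_id).sub contDiff_const)

lemma psi_of_le {t : ℝ} (h : t ≤ 1/3) : psi t = 0 :=
  Real.smoothTransition.zero_of_nonpos (by linarith)

lemma psi_of_ge {t : ℝ} (h : 2/3 ≤ t) : psi t = 1 :=
  Real.smoothTransition.one_of_one_le (by linarith)

lemma psi_nonneg (t : ℝ) : 0 ≤ psi t := Real.smoothTransition.nonneg _

lemma psi_le_one (t : ℝ) : psi t ≤ 1 := Real.smoothTransition.le_one _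

lemma psi_symm (t : ℝ) : psi (1 - t) = 1 - psi t := by
  have : (3 * (1 - t) - 1) = 1 - (3 * t - 1) := by ring
  rw [psi, this, st_symm]; rfl

lemma psi_cont_deriv : Continuous (deriv psi) :=
  psi_contDiff.continuous_deriv (by exact_mod_cast le_top)

lemma deriv_psi_symm (t : ℝ) : deriv psi (1 - t) = deriv psi t := by
  have hps : psi = fun t => 1 - psi (1 - t) := by
    funext s; rw [psi_symm]; ring
  conv_rhs => rw [hps]
  rw [deriv_const_sub, deriv_comp_const_sub]
  ring

lemma integral_deriv_psi : ∫ t in (0:ℝ)..1, deriv psi t = 1 := by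
  rw [intervalIntegral.integral_deriv_eq_sub (fun x _ => (psi_contDiff.differentiable (by simp)).differentiableAt)
    (psi_cont_deriv.intervalIntegrable _ _)]
  rw [show psi 1 = 1 from psi_of_ge (by norm_num), show psi 0 = 0 from psi_of_le (by norm_num)]
  norm_num


variable {A : Type*} [NormedCommRing A] [NormedSpace ℝ A]
  [IsScalarTower ℝ A A] [SMulCommClass ℝ A A] [CompleteSpace A]

noncomputable def sgm (a b : A) (t : ℝ) : A := a + psi t • (b - a)

lemma sgm_of_le (a b : A) {t : ℝ} (h : t ≤ 1/3) : sgm a b t = a := by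
  simp [sgm, psi_of_le h]

lemma sgm_of_ge (a b : A) {t : ℝ} (h : 2/3 ≤ t) : sgm a b t = b := by
  simp [sgm, psi_of_ge h]

lemma sgm_contDiff (a b : A) : ContDiff ℝ (⊤ : ℕ∞) (sgm a b) :=
  contDiff_const.add (psi_contDiff.smul contDiff_const)

lemma sgm_continuous (a b : A) : Continuous (sgm a b) :=
  (sgm_contDiff a b).continuous

lemma sgm_hasDerivAt (a b : A) (t : ℝ) :
    HasDerivAt (sgm a b) (deriv psi t • (b - a)) t := by
  have h1 : HasDerivAt psi (deriv psi t) t :=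
    ((psi_contDiff.differentiable (by simp)) t).hasDerivAt
  have := (hasDerivAt_const t a).add (h1.smul_const (b - a))
  convert this using 1 <;> first | rfl | simp | (funext s; simp [sgm])

lemma sgm_mem {U : Set A} {a b : A} (h : segment ℝ a b ⊆ U) (t : ℝ) : sgm a b t ∈ U := by
  apply h
  rw [segment_eq_image']
  exact ⟨psi t, ⟨psi_nonneg t, psi_le_one t⟩, rfl⟩

/-- The integral of `f` along the reparametrized segment from `a` to `b`. -/
noncomputable def segInt (f : A → A) (a b : A) : A :=
  ∫ t in (0:ℝ)..1, deriv psi t • (f (sgm a b t) * (b - a))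

lemma sgm_symm (a b : A) (t : ℝ) : sgm b a (1 - t) = sgm a b t := by
  simp only [sgm, psi_symm]
  rw [sub_smul, one_smul]
  abel_nf
  module

lemma segInt_symm (f : A → A) (a b : A) : segInt f b a = - segInt f a b := by
  have h1 : segInt f b a
      = ∫ t in (0:ℝ)..1, (fun s => deriv psi s • (f (sgm a b s) * (a - b))) (1 - t) := by
    refine intervalIntegral.integral_congr fun t _ => ?_
    simp only [deriv_psi_symm, sgm_symm]
  rw [h1, intervalIntegral.integral_comp_sub_left (fun s => deriv psi s • (f (sgm a b s) * (a - b))) 1]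
  norm_num
  rw [segInt, ← intervalIntegral.integral_neg]
  refine intervalIntegral.integral_congr fun t _ => ?_
  have : a - b = -(b - a) := by ring
  rw [this, mul_neg, smul_neg]

section Loop

def IsChain (U : Set A) (n : ℕ) (p : ℕ → A) : Prop :=
  ∀ k < n, segment ℝ (p k) (p (k+1)) ⊆ U

noncomputable def chainSum (f : A → A) (n : ℕ) (p : ℕ → A) : A :=
  ∑ k ∈ Finset.range n, segInt f (p k) (p (k+1))

noncomputable def loopK (n : ℕ) (t : ℝ) : ℕ := min (n - 1) ⌊(n:ℝ) * t⌋₊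

noncomputable def loop (n : ℕ) (p : ℕ → A) (t : ℝ) : A :=
  sgm (p (loopK n t)) (p (loopK n t + 1)) ((n:ℝ) * t - loopK n t)

variable {n : ℕ} {p : ℕ → A}

lemma loopK_lt (hn : 1 ≤ n) (t : ℝ) : loopK n t < n :=
  lt_of_le_of_lt (min_le_left _ _) (Nat.sub_lt hn one_pos)

lemma npos (hn : 1 ≤ n) : (0:ℝ) < n := by exact_mod_cast hn

lemma loop_left (hn : 1 ≤ n) {t : ℝ} (ht : t < 1/(3*n)) : loop n p t = p 0 := by
  have hn' := npos hn
  have hnt : (n:ℝ) * t < 1/3 := by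
    have := mul_lt_mul_of_pos_left ht hn'
    calc (n:ℝ) * t < n * (1/(3*n)) := this
    _ = 1/3 := by field_simp
  have hfl : ⌊(n:ℝ) * t⌋₊ = 0 := Nat.floor_eq_zero.2 (lt_of_lt_of_le hnt (by norm_num))
  have hK : loopK n t = 0 := by simp [loopK, hfl]
  rw [loop, hK]
  exact sgm_of_le _ _ (by push_cast; linarith)

lemma loop_right (hn : 1 ≤ n) {t : ℝ} (ht : 1 - 1/(3*n) < t) : loop n p t = p n := by
  have hn' := npos hn
  have hnt : (n:ℝ) - 1/3 < n * t := by
    have := mul_lt_mul_of_pos_left ht hn'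
    calc (n:ℝ) - 1/3 = n * (1 - 1/(3*n)) := by field_simp
    _ < n * t := this
  have hcast : ((n - 1 : ℕ) : ℝ) = (n:ℝ) - 1 := by
    push_cast [Nat.cast_sub hn]; ring
  have hK : loopK n t = n - 1 := by
    rcases le_or_gt ((n:ℝ)) ((n:ℝ) * t) with h | h
    · have : n ≤ ⌊(n:ℝ) * t⌋₊ := Nat.le_floor (by exact_mod_cast h)
      exact min_eq_left (le_trans (Nat.sub_le _ _) this)
    · have hfl : ⌊(n:ℝ) * t⌋₊ = n - 1 := by
        rw [Nat.floor_eq_iff (by nlinarith)]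
        constructor
        · rw [hcast]; linarith
        · rw [hcast]; linarith
      simp [loopK, hfl]
  rw [loop, hK, hcast]
  rw [Nat.sub_add_cancel hn]
  exact sgm_of_ge _ _ (by linarith)

lemma loop_mid (hn : 1 ≤ n) {j : ℕ} (hj : j < n) {t : ℝ}
    (ht : t ∈ Ioo ((j:ℝ)/n) (((j:ℝ)+1)/n)) :
    loop n p t = sgm (p j) (p (j+1)) ((n:ℝ)*t - j) := by
  have hn' := npos hn
  have h1 : (j:ℝ) < n * t := by
    have h := ht.1; rw [div_lt_iff₀ hn'] at h; linarith [mul_comm t (n:ℝ)]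
  have h2 : (n:ℝ) * t < j + 1 := by
    have h := ht.2; rw [lt_div_iff₀ hn'] at h; linarith [mul_comm t (n:ℝ)]
  have hnt0 : (0:ℝ) ≤ n * t := le_trans (by positivity) h1.le
  have hfl : ⌊(n:ℝ) * t⌋₊ = j := by
    rw [Nat.floor_eq_iff hnt0]
    exact ⟨h1.le, by push_cast; linarith⟩
  have hK : loopK n t = j := by
    rw [loopK, hfl]
    exact min_eq_right (Nat.le_pred_of_lt hj)
  rw [loop, hK]

lemma loop_junction (hn : 1 ≤ n) {j : ℕ} (hj1 : 1 ≤ j) (hj2 : j < n) {t : ℝ}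
    (ht1 : (j:ℝ)/n - 1/(3*n) < t) (ht2 : t < (j:ℝ)/n + 1/(3*n)) :
    loop n p t = p j := by
  have hn' := npos hn
  have hj1' : (1:ℝ) ≤ j := by exact_mod_cast hj1
  have hb1 : (j:ℝ) - 1/3 < n * t := by
    have := mul_lt_mul_of_pos_left ht1 hn'
    calc (j:ℝ) - 1/3 = n * ((j:ℝ)/n - 1/(3*n)) := by field_simp
    _ < n * t := this
  have hb2 : (n:ℝ) * t < j + 1/3 := by
    have := mul_lt_mul_of_pos_left ht2 hn'
    calc (n:ℝ) * t < n * ((j:ℝ)/n + 1/(3*n)) := this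
    _ = j + 1/3 := by field_simp
  rcases le_or_gt ((j:ℝ)) ((n:ℝ)*t) with h | h
  · have hnt0 : (0:ℝ) ≤ n * t := le_trans (by positivity) h
    have hfl : ⌊(n:ℝ) * t⌋₊ = j := by
      rw [Nat.floor_eq_iff hnt0]
      exact ⟨h, by push_cast; linarith⟩
    have hK : loopK n t = j := by
      rw [loopK, hfl]; exact min_eq_right (Nat.le_pred_of_lt hj2)
    rw [loop, hK, sgm_of_le _ _ (by linarith)]
  · have hcast : ((j - 1 : ℕ) : ℝ) = (j:ℝ) - 1 := by
      push_cast [Nat.cast_sub hj1]; ring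
    have hfl : ⌊(n:ℝ) * t⌋₊ = j - 1 := by
      rw [Nat.floor_eq_iff (by nlinarith)]
      rw [hcast]
      exact ⟨by linarith, by linarith⟩
    have hK : loopK n t = j - 1 := by
      rw [loopK, hfl]
      exact min_eq_right (by omega)
    rw [loop, hK, hcast, Nat.sub_add_cancel hj1]
    exact sgm_of_ge _ _ (by linarith)

lemma loop_zero (hn : 1 ≤ n) : loop n p 0 = p 0 :=
  loop_left hn (by positivity)

lemma loop_one (hn : 1 ≤ n) : loop n p 1 = p n :=
  loop_right hn (by
    have h1 := npos hn
    have h2 : 0 < 1/(3*(n:ℝ)) := by positivity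
    linarith)

lemma loop_mem {U : Set A} (hn : 1 ≤ n) (hchain : IsChain U n p) (t : ℝ) :
    loop n p t ∈ U :=
  sgm_mem (hchain _ (loopK_lt hn t)) _

lemma loop_contDiffAt (hn : 1 ≤ n) (t : ℝ) : ContDiffAt ℝ 1 (loop n p) t := by
  have hn' := npos hn
  have h3n : (0:ℝ) < 1/(3*n) := by positivity
  rcases lt_or_ge t (1/(3*n)) with h | h
  · exact contDiffAt_const.congr_of_eventuallyEq
      (Filter.eventuallyEq_of_mem (Iio_mem_nhds h) fun s hs => loop_left hn hs)
  rcases lt_or_ge (1 - 1/(3*(n:ℝ))) t with h' | h'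
  · exact contDiffAt_const.congr_of_eventuallyEq
      (Filter.eventuallyEq_of_mem (Ioi_mem_nhds h') fun s hs => loop_right hn hs)
  set j := ⌊(n:ℝ) * t⌋₊ with hjdef
  have hnt0 : (0:ℝ) ≤ n * t := by nlinarith
  have hjle : (j:ℝ) ≤ n * t := Nat.floor_le hnt0
  have hjlt : (n:ℝ) * t < j + 1 := by
    have := Nat.lt_floor_add_one ((n:ℝ)*t); push_cast at this ⊢; linarith
  have e2 : (n:ℝ) * (1 - 1/(3*n)) = n - 1/3 := by field_simp
  have hjn : j < n := by
    rw [hjdef, Nat.floor_lt hnt0]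
    nlinarith [mul_le_mul_of_nonneg_left h' hn'.le]
  rcases lt_or_ge ((n:ℝ)*t) (j + 1/3) with hc | hc
  · have hj1 : 1 ≤ j := by
      by_contra hj0
      push_neg at hj0
      interval_cases j
      simp only [Nat.cast_zero, zero_add] at hc
      have e : (n:ℝ) * (1/(3*n)) = 1/3 := by field_simp
      nlinarith [mul_le_mul_of_nonneg_left h hn'.le]
    refine contDiffAt_const.congr_of_eventuallyEq
      (Filter.eventuallyEq_of_mem (Ioo_mem_nhds ?_ ?_)
        (fun s hs => loop_junction hn hj1 hjn hs.1 hs.2))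
    · have : (j:ℝ)/n ≤ t := by
        rw [div_le_iff₀ hn']; linarith [mul_comm t (n:ℝ)]
      have : 0 < 1/(3*(n:ℝ)) := by positivity
      linarith
    · have e : (j:ℝ)/n + 1/(3*n) = ((j:ℝ) + 1/3)/n := by field_simp
      rw [e, lt_div_iff₀ hn']
      linarith [mul_comm t (n:ℝ)]
  · have ht1 : (j:ℝ)/n < t := by rw [div_lt_iff₀ hn']; nlinarith
    have ht2 : t < ((j:ℝ)+1)/n := by rw [lt_div_iff₀ hn']; nlinarith
    have hsm : ContDiffAt ℝ 1 (fun s => sgm (p j) (p (j+1)) ((n:ℝ)*s - j)) t := by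
      have : ContDiff ℝ 1 (fun s : ℝ => sgm (p j) (p (j+1)) ((n:ℝ)*s - j)) :=
        ((sgm_contDiff (p j) (p (j+1))).of_le (by exact_mod_cast le_top)).comp
          ((contDiff_const.mul contDiff_id).sub contDiff_const)
      exact this.contDiffAt
    exact hsm.congr_of_eventuallyEq
      (Filter.eventuallyEq_of_mem (Ioo_mem_nhds ht1 ht2)
        (fun s hs => loop_mid hn hjn hs))

end Loop

section LoopInt

variable {n : ℕ} {p : ℕ → A} {U : Set A} {f : A → A}

lemma loop_contDiff (hn : 1 ≤ n) : ContDiff ℝ 1 (loop n p) :=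
  contDiff_iff_contDiffAt.2 (loop_contDiffAt hn)

lemma loop_continuous (hn : 1 ≤ n) : Continuous (loop n p) :=
  (loop_contDiff hn).continuous

lemma loop_deriv_continuous (hn : 1 ≤ n) : Continuous (deriv (loop n p)) :=
  (loop_contDiff hn).continuous_deriv le_rfl

lemma loop_hasDerivAt_mid (hn : 1 ≤ n) {j : ℕ} (hj : j < n) {t : ℝ}
    (ht : t ∈ Ioo ((j:ℝ)/n) (((j:ℝ)+1)/n)) :
    HasDerivAt (loop n p)
      (((n:ℝ) * deriv psi ((n:ℝ)*t - j)) • (p (j+1) - p j)) t := by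
  have hu : HasDerivAt (fun s : ℝ => (n:ℝ)*s - (j:ℝ)) (n:ℝ) t := by
    simpa using ((hasDerivAt_id t).const_mul (n:ℝ)).sub_const (j:ℝ)
  have hs : HasDerivAt (fun s : ℝ => sgm (p j) (p (j+1)) ((n:ℝ)*s - (j:ℝ)))
      ((n:ℝ) • (deriv psi ((n:ℝ)*t - j) • (p (j+1) - p j))) t :=
    by have h := HasDerivAt.scomp t (sgm_hasDerivAt (p j) (p (j+1)) ((n:ℝ)*t - j)) hu; exact h
  refine (hs.congr_of_eventuallyEq ?_).congr_deriv ?_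
  · exact Filter.eventuallyEq_of_mem (Ioo_mem_nhds ht.1 ht.2)
      (fun s hs' => loop_mid hn hj hs')
  · rw [smul_smul]

lemma loop_integrand_continuous (hn : 1 ≤ n) (hchain : IsChain U n p)
    (hf : ContinuousOn f U) :
    Continuous (fun t => f (loop n p t) * deriv (loop n p) t) := by
  have h1 : Continuous (fun t => f (loop n p t)) :=
    hf.comp_continuous (loop_continuous hn) (loop_mem hn hchain)
  exact h1.mul (loop_deriv_continuous hn)

lemma loop_piece_integral (hn : 1 ≤ n) (hchain : IsChain U n p)
    (hf : ContinuousOn f U) {j : ℕ} (hj : j < n) :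
    (∫ t in ((j:ℝ)/n)..(((j:ℝ)+1)/n), f (loop n p t) * deriv (loop n p) t)
      = segInt f (p j) (p (j+1)) := by
  have hn' := npos hn
  set G : ℝ → A := fun s => ((n:ℝ) * deriv psi s) • (f (sgm (p j) (p (j+1)) s) * (p (j+1) - p j)) with hG
  have step1 : (∫ t in ((j:ℝ)/n)..(((j:ℝ)+1)/n), f (loop n p t) * deriv (loop n p) t)
      = ∫ t in ((j:ℝ)/n)..(((j:ℝ)+1)/n), G ((n:ℝ) * t + (-(j:ℝ))) := by
    refine intervalIntegral.integral_congr_ae ?_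
    have h0 : (MeasureTheory.volume : MeasureTheory.Measure ℝ) {((j:ℝ)+1)/n} = 0 :=
      MeasureTheory.measure_singleton _
    rw [MeasureTheory.ae_iff]
    refine MeasureTheory.measure_mono_null ?_ h0
    intro t ht
    simp only [Set.mem_setOf_eq, not_forall] at ht
    obtain ⟨htmem, htne⟩ := ht
    rw [Set.uIoc_of_le (by
      have h1n : (0:ℝ) ≤ 1/n := by positivity
      calc (j:ℝ)/n ≤ (j:ℝ)/n + 1/n := by linarith
      _ = ((j:ℝ)+1)/n := by ring)] at htmem
    by_contra hne
    apply htne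
    have htIoo : t ∈ Ioo ((j:ℝ)/n) (((j:ℝ)+1)/n) :=
      ⟨htmem.1, lt_of_le_of_ne htmem.2 (by simpa using hne)⟩
    have hD := (loop_hasDerivAt_mid (p := p) hn hj htIoo).deriv
    rw [loop_mid hn hj htIoo, hD, hG]
    simp only [← sub_eq_add_neg]
    rw [mul_smul_comm]
  have step2 : (∫ t in ((j:ℝ)/n)..(((j:ℝ)+1)/n), G ((n:ℝ) * t + (-(j:ℝ))))
      = (n:ℝ)⁻¹ • ∫ s in ((n:ℝ)*((j:ℝ)/n) + (-(j:ℝ)))..((n:ℝ)*((((j:ℝ)+1))/n) + (-(j:ℝ))), G s :=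
    intervalIntegral.integral_comp_mul_add G hn'.ne' (-(j:ℝ))
  have e1 : (n:ℝ)*((j:ℝ)/n) + (-(j:ℝ)) = 0 := by field_simp; ring
  have e2 : (n:ℝ)*((((j:ℝ)+1))/n) + (-(j:ℝ)) = 1 := by field_simp; ring
  have step3 : (∫ s in (0:ℝ)..1, G s) = (n:ℝ) • segInt f (p j) (p (j+1)) := by
    rw [segInt, ← intervalIntegral.integral_smul]
    refine intervalIntegral.integral_congr fun s _ => ?_
    rw [hG]; simp only [mul_smul]
  rw [step1, step2, e1, e2, step3, smul_smul, inv_mul_cancel₀ hn'.ne', one_smul]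

lemma loop_integral (hn : 1 ≤ n) (hchain : IsChain U n p) (hf : ContinuousOn f U) :
    (∫ t in (0:ℝ)..1, f (loop n p t) * deriv (loop n p) t) = chainSum f n p := by
  have key := intervalIntegral.sum_integral_adjacent_intervals
    (a := fun k : ℕ => (k:ℝ)/n) (n := n)
    (fun k _ => ((loop_integrand_continuous hn hchain hf).intervalIntegrable
      (μ := MeasureTheory.volume) _ _))
  beta_reduce at key
  rw [show (((0:ℕ)):ℝ)/(n:ℝ) = 0 by simp, show ((n:ℕ):ℝ)/(n:ℝ) = 1 from div_self (npos hn).ne'] at key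
  rw [← key, chainSum]
  refine Finset.sum_congr rfl fun k hk => ?_
  have hk' := Finset.mem_range.1 hk
  rw [← loop_piece_integral hn hchain hf hk']
  congr 1
  push_cast; ring

lemma chainSum_eq_zero (hf : ContinuousOn f U) (hchain : IsChain U n p) (hclose : p n = p 0)
    (H1 : ∀ γ : ℝ → A, ContDiff ℝ 1 γ → (∀ t ∈ Icc (0:ℝ) 1, γ t ∈ U) → γ 0 = γ 1 →
      (∫ t in (0:ℝ)..1, f (γ t) * deriv γ t) = 0) :
    chainSum f n p = 0 := by
  rcases Nat.eq_zero_or_pos n with rfl | hn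
  · simp [chainSum]
  · rw [← loop_integral hn hchain hf]
    exact H1 _ (loop_contDiff hn) (fun t _ => loop_mem hn hchain t)
      (by rw [loop_zero hn, loop_one hn, hclose])

end LoopInt

section Chains

variable {U : Set A} {f : A → A}

/-- Extend a chain by one more point. -/
def extChain (n : ℕ) (p : ℕ → A) (z : A) : ℕ → A := fun k => if k ≤ n then p k else z

lemma extChain_eq {n : ℕ} {p : ℕ → A} {z : A} {k : ℕ} (hk : k ≤ n) :
    extChain n p z k = p k := if_pos hk

lemma extChain_last (n : ℕ) (p : ℕ → A) (z : A) : extChain n p z (n+1) = z :=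
  if_neg (by omega)

lemma extChain_isChain {n : ℕ} {p : ℕ → A} {z : A} (hp : IsChain U n p)
    (hseg : segment ℝ (p n) z ⊆ U) : IsChain U (n+1) (extChain n p z) := by
  intro k hk
  rcases lt_or_ge k n with h | h
  · rw [extChain_eq h.le, extChain_eq (by omega)]
    exact hp k h
  · have hkn : k = n := by omega
    subst hkn
    rw [extChain_eq le_rfl, extChain_last]
    exact hseg

lemma chainSum_ext (f : A → A) (n : ℕ) (p : ℕ → A) (z : A) :
    chainSum f (n+1) (extChain n p z) = chainSum f n p + segInt f (p n) z := by
  rw [chainSum, Finset.sum_range_succ, extChain_eq le_rfl, extChain_last]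
  congr 1
  refine Finset.sum_congr rfl fun k hk => ?_
  have hk' := Finset.mem_range.1 hk
  rw [extChain_eq (by omega), extChain_eq (by omega)]

/-- Any two chains with the same endpoints have the same integral sum,
given that all closed-chain sums vanish. -/
lemma chainSum_welldef (hf : ContinuousOn f U)
    (H1 : ∀ γ : ℝ → A, ContDiff ℝ 1 γ → (∀ t ∈ Icc (0:ℝ) 1, γ t ∈ U) → γ 0 = γ 1 →
      (∫ t in (0:ℝ)..1, f (γ t) * deriv γ t) = 0)
    {n m : ℕ} {p q : ℕ → A} (hp : IsChain U n p) (hq : IsChain U m q)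
    (h0 : p 0 = q 0) (h1 : p n = q m) :
    chainSum f n p = chainSum f m q := by
  classical
  set r : ℕ → A := fun k => if k ≤ n then p k else q (m - (k - n)) with hr
  have hrp : ∀ k ≤ n, r k = p k := fun k hk => if_pos hk
  have hrq : ∀ j ≤ m, r (n + j) = q (m - j) := by
    intro j hj
    rcases Nat.eq_zero_or_pos j with rfl | hjpos
    · simpa [hr, h1] using rfl
    · have : ¬ (n + j ≤ n) := by omega
      simp only [hr, this, if_false]
      congr 1
      omega
  have hrchain : IsChain U (n + m) r := by
    intro k hk
    rcases lt_or_ge k n with h | h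
    · rw [hrp k h.le, hrp (k+1) (by omega)]
      exact hp k h
    · obtain ⟨j, rfl⟩ : ∃ j, k = n + j := ⟨k - n, by omega⟩
      have hjm : j < m := by omega
      rw [hrq j hjm.le, show n + j + 1 = n + (j+1) by omega, hrq (j+1) (by omega)]
      rw [segment_symm]
      have e : m - (j+1) + 1 = m - j := by omega
      have := hq (m - (j+1)) (by omega)
      rwa [e] at this
  have hrclose : r (n + m) = r 0 := by
    rw [hrq m le_rfl, Nat.sub_self, hrp 0 (Nat.zero_le _), h0]
  have hzero : chainSum f (n + m) r = 0 := chainSum_eq_zero hf hrchain hrclose H1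
  have hsplit : chainSum f (n + m) r
      = chainSum f n p + ∑ j ∈ Finset.range m, segInt f (r (n+j)) (r (n+j+1)) := by
    rw [chainSum, Finset.sum_range_add, chainSum]
    congr 1
    refine Finset.sum_congr rfl fun k hk => ?_
    have hkn := Finset.mem_range.1 hk
    rw [hrp k (by omega), hrp (k+1) (by omega)]
  have hrev : ∑ j ∈ Finset.range m, segInt f (r (n+j)) (r (n+j+1)) = - chainSum f m q := by
    have e1 : ∀ j ∈ Finset.range m, segInt f (r (n+j)) (r (n+j+1))
        = - segInt f (q (m - 1 - j)) (q (m - 1 - j + 1)) := by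
      intro j hj
      have hjm := Finset.mem_range.1 hj
      rw [hrq j hjm.le, show n + j + 1 = n + (j+1) by omega, hrq (j+1) (by omega)]
      rw [show m - (j+1) = m - 1 - j by omega, show m - 1 - j + 1 = m - j by omega]
      exact segInt_symm f _ _
    rw [Finset.sum_congr rfl e1, Finset.sum_neg_distrib,
      Finset.sum_range_reflect (fun j => segInt f (q j) (q (j+1))) m]
    rfl
  rw [hsplit, hrev, add_neg_eq_zero] at hzero
  exact hzero

end Chains

section Prim

variable {U : Set A} {f : A → A} {b₀ : A}

/-- `HasChainTo U b₀ b`: there is a chain of segments inside `U` from `b₀` to `b`. -/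
def HasChainTo (U : Set A) (b₀ b : A) : Prop :=
  ∃ c : ℕ × (ℕ → A), c.2 0 = b₀ ∧ c.2 c.1 = b ∧ IsChain U c.1 c.2

lemma hasChainTo_self (b₀ : A) : HasChainTo U b₀ b₀ :=
  ⟨(0, fun _ => b₀), rfl, rfl, fun k hk => absurd hk (Nat.not_lt_zero k)⟩

lemma HasChainTo.extend {b y : A} (hb : HasChainTo U b₀ b) (hseg : segment ℝ b y ⊆ U) :
    HasChainTo U b₀ y := by
  obtain ⟨⟨n, p⟩, h0, h1, hchain⟩ := hb
  dsimp only at h0 h1 hchain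
  exact ⟨(n+1, extChain n p y), by show extChain n p y 0 = b₀; rw [extChain_eq (Nat.zero_le n), h0],
    extChain_last n p y, extChain_isChain hchain (by rwa [h1])⟩

lemma exists_chain (hU : IsOpen U) (hconn : IsPreconnected U) {b₀ b : A}
    (hb₀ : b₀ ∈ U) (hb : b ∈ U) : HasChainTo U b₀ b := by
  classical
  set S : Set A := {y | y ∈ U ∧ HasChainTo U b₀ y} with hS
  set T : Set A := {y | y ∈ U ∧ ¬ HasChainTo U b₀ y} with hT
  have hSopen : IsOpen S := by
    rw [Metric.isOpen_iff]
    rintro y ⟨hyU, hy⟩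
    obtain ⟨ε, hε, hball⟩ := Metric.isOpen_iff.1 hU y hyU
    refine ⟨ε, hε, fun z hz => ⟨hball hz, hy.extend ?_⟩⟩
    exact ((convex_ball y ε).segment_subset (Metric.mem_ball_self hε) hz).trans hball
  have hTopen : IsOpen T := by
    rw [Metric.isOpen_iff]
    rintro y ⟨hyU, hy⟩
    obtain ⟨ε, hε, hball⟩ := Metric.isOpen_iff.1 hU y hyU
    refine ⟨ε, hε, fun z hz => ⟨hball hz, fun hcz => hy (hcz.extend ?_)⟩⟩
    exact ((convex_ball y ε).segment_subset hz (Metric.mem_ball_self hε)).trans hball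
  by_contra hnc
  have hne1 : (U ∩ S).Nonempty := ⟨b₀, hb₀, hb₀, hasChainTo_self b₀⟩
  have hne2 : (U ∩ T).Nonempty := ⟨b, hb, hb, hnc⟩
  obtain ⟨x, _, ⟨-, hx1⟩, -, hx2⟩ :=
    hconn S T hSopen hTopen (fun y hy => by
      by_cases h : HasChainTo U b₀ y
      · exact Or.inl ⟨hy, h⟩
      · exact Or.inr ⟨hy, h⟩) hne1 hne2
  exact hx2 hx1

open Classical in
/-- The primitive of `f`, defined via integrals along chains from a base point. -/
noncomputable def primF (f : A → A) (U : Set A) (b₀ : A) : A → A := fun b =>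
  if h : HasChainTo U b₀ b then chainSum f h.choose.1 h.choose.2 else 0

lemma primF_eq (hf : ContinuousOn f U)
    (H1 : ∀ γ : ℝ → A, ContDiff ℝ 1 γ → (∀ t ∈ Icc (0:ℝ) 1, γ t ∈ U) → γ 0 = γ 1 →
      (∫ t in (0:ℝ)..1, f (γ t) * deriv γ t) = 0)
    {b : A} {n : ℕ} {p : ℕ → A} (h0 : p 0 = b₀) (h1 : p n = b) (hp : IsChain U n p) :
    primF f U b₀ b = chainSum f n p := by
  have hb : HasChainTo U b₀ b := ⟨(n, p), h0, h1, hp⟩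
  rw [primF, dif_pos hb]
  obtain ⟨g0, g1, gchain⟩ := hb.choose_spec
  exact chainSum_welldef hf H1 gchain hp (by rw [g0, h0]) (by rw [g1, h1])

lemma primF_add_seg (hf : ContinuousOn f U)
    (H1 : ∀ γ : ℝ → A, ContDiff ℝ 1 γ → (∀ t ∈ Icc (0:ℝ) 1, γ t ∈ U) → γ 0 = γ 1 →
      (∫ t in (0:ℝ)..1, f (γ t) * deriv γ t) = 0)
    {b y : A} (hb : HasChainTo U b₀ b) (hseg : segment ℝ b y ⊆ U) :
    primF f U b₀ y = primF f U b₀ b + segInt f b y := by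
  obtain ⟨⟨n, p⟩, h0, h1, hp⟩ := hb
  dsimp only at h0 h1 hp
  rw [primF_eq hf H1 h0 h1 hp,
    primF_eq hf H1 (n := n+1) (p := extChain n p y)
      (by rw [extChain_eq (Nat.zero_le n)]; exact h0) (extChain_last n p y)
      (extChain_isChain hp (by rwa [h1])),
    chainSum_ext, h1]

end Prim

section Deriv

variable (𝕂 : Type*) [RCLike 𝕂] [NormedAlgebra 𝕂 A] [IsScalarTower ℝ 𝕂 A]
variable {U : Set A} {f : A → A} {b₀ : A}

lemma primF_hasFDerivAt (hU : IsOpen U) (hf : ContinuousOn f U)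
    (H1 : ∀ γ : ℝ → A, ContDiff ℝ 1 γ → (∀ t ∈ Icc (0:ℝ) 1, γ t ∈ U) → γ 0 = γ 1 →
      (∫ t in (0:ℝ)..1, f (γ t) * deriv γ t) = 0)
    {b : A} (hb : b ∈ U) (hchain : HasChainTo U b₀ b) :
    HasFDerivAt (primF f U b₀) ((ContinuousLinearMap.mul 𝕂 A).flip (f b)) b := by
  obtain ⟨ε, hε, hball⟩ := Metric.isOpen_iff.1 hU b hb
  -- bound on deriv psi
  obtain ⟨M, hM⟩ := (isCompact_Icc (a := (0:ℝ)) (b := 1)).exists_bound_of_continuousOn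
    psi_cont_deriv.continuousOn
  have hM0 : 0 ≤ M := le_trans (norm_nonneg _) (hM 0 (by norm_num))
  rw [hasFDerivAt_iff_isLittleO_nhds_zero]
  rw [Asymptotics.isLittleO_iff]
  intro c hc
  -- continuity of f at b
  have hfb : ContinuousAt f b := hf.continuousAt (hU.mem_nhds hb)
  obtain ⟨δ, hδ, hδf⟩ := Metric.continuousAt_iff.1 hfb (c / (M + 1)) (by positivity)
  have hmem : Metric.ball (0:A) (min ε δ) ∈ nhds (0:A) :=
    Metric.ball_mem_nhds _ (lt_min hε hδ)
  filter_upwards [hmem] with h hh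
  rw [Metric.mem_ball, dist_zero_right] at hh
  have hhε : ‖h‖ < ε := lt_of_lt_of_le hh (min_le_left _ _)
  have hhδ : ‖h‖ < δ := lt_of_lt_of_le hh (min_le_right _ _)
  -- b + h and segment b (b+h) are in the ball
  have hsub : segment ℝ b (b + h) ⊆ U := by
    refine ((convex_ball b ε).segment_subset (Metric.mem_ball_self hε) ?_).trans hball
    rw [Metric.mem_ball, dist_eq_norm, add_sub_cancel_left]
    exact hhε
  have key : primF f U b₀ (b + h) = primF f U b₀ b + segInt f b (b + h) :=
    primF_add_seg hf H1 hchain hsub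
  have hmemball : ∀ t : ℝ, b + psi t • h ∈ U := by
    intro t
    apply hball
    rw [Metric.mem_ball, dist_eq_norm, add_sub_cancel_left, norm_smul,
      Real.norm_eq_abs, abs_of_nonneg (psi_nonneg t)]
    nlinarith [psi_le_one t, psi_nonneg t, norm_nonneg h]
  -- rewrite segInt
  have hsgm : ∀ t : ℝ, sgm b (b + h) t = b + psi t • h := by
    intro t; rw [sgm, add_sub_cancel_left]
  have hseg1 : segInt f b (b + h)
      = ∫ t in (0:ℝ)..1, deriv psi t • (f (b + psi t • h) * h) := by
    rw [segInt]
    refine intervalIntegral.integral_congr fun t _ => ?_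
    rw [hsgm t, add_sub_cancel_left]
  have hcont1 : Continuous fun t => deriv psi t • (f (b + psi t • h) * h) := by
    have hc1 : Continuous fun t : ℝ => b + psi t • h :=
      continuous_const.add ((psi_contDiff.continuous).smul continuous_const)
    exact psi_cont_deriv.smul ((hf.comp_continuous hc1 hmemball).mul continuous_const)
  have hcont2 : Continuous fun t : ℝ => deriv psi t • (f b * h) :=
    psi_cont_deriv.smul continuous_const
  have hconst : (∫ t in (0:ℝ)..1, deriv psi t • (f b * h)) = f b * h := by
    rw [intervalIntegral.integral_smul_const, integral_deriv_psi, one_smul]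
  have hdiff : primF f U b₀ (b + h) - primF f U b₀ b - (ContinuousLinearMap.mul 𝕂 A).flip (f b) h
      = ∫ t in (0:ℝ)..1, deriv psi t • ((f (b + psi t • h) - f b) * h) := by
    rw [key]
    have : (ContinuousLinearMap.mul 𝕂 A).flip (f b) h = h * f b := rfl
    rw [this, add_sub_cancel_left, hseg1, show h * f b = f b * h from mul_comm _ _, ← hconst,
      ← intervalIntegral.integral_sub (hcont1.intervalIntegrable _ _) (hcont2.intervalIntegrable _ _)]
    refine intervalIntegral.integral_congr fun t _ => ?_
    rw [← smul_sub, ← sub_mul]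
  rw [hdiff]
  refine le_trans (intervalIntegral.norm_integral_le_of_norm_le_const (C := M * (c / (M+1)) * ‖h‖) ?_) ?_
  · intro t ht
    rw [Set.uIoc_of_le (by norm_num : (0:ℝ) ≤ 1)] at ht
    have htI : t ∈ Icc (0:ℝ) 1 := ⟨ht.1.le, ht.2⟩
    have hdist : dist (b + psi t • h) b < δ := by
      rw [dist_eq_norm, add_sub_cancel_left, norm_smul,
        Real.norm_eq_abs, abs_of_nonneg (psi_nonneg t)]
      nlinarith [psi_le_one t, psi_nonneg t, norm_nonneg h]
    have hfd : ‖f (b + psi t • h) - f b‖ < c / (M + 1) := by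
      have := hδf hdist
      rwa [dist_eq_norm] at this
    calc ‖deriv psi t • ((f (b + psi t • h) - f b) * h)‖
        = ‖deriv psi t‖ * ‖(f (b + psi t • h) - f b) * h‖ := norm_smul _ _
      _ ≤ M * (c / (M+1) * ‖h‖) := by
          refine mul_le_mul (hM t htI) ?_ (norm_nonneg _) hM0
          exact le_trans (norm_mul_le _ _)
            (mul_le_mul_of_nonneg_right hfd.le (norm_nonneg _))
      _ = M * (c / (M+1)) * ‖h‖ := by ring
  · have hfrac : M * (c / (M+1)) ≤ c := by
      rw [show M * (c / (M+1)) = M * c / (M+1) by ring, div_le_iff₀ (by positivity)]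
      nlinarith
    calc M * (c / (M+1)) * ‖h‖ * |1 - (0:ℝ)| = M * (c / (M+1)) * ‖h‖ := by norm_num
    _ ≤ c * ‖h‖ := mul_le_mul_of_nonneg_right hfrac (norm_nonneg _)

end Deriv

section Approx

noncomputable def qfun (p : Polynomial ℝ) : ℝ → ℝ :=
  fun t => ∑ k ∈ p.support, p.coeff k / (k+1) * t^(k+1)

lemma qfun_contDiff (p : Polynomial ℝ) : ContDiff ℝ (⊤ : ℕ∞) (qfun p) :=
  ContDiff.sum fun k _ => contDiff_const.mul (contDiff_id.pow _)

lemma qfun_zero (p : Polynomial ℝ) : qfun p 0 = 0 := by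
  simp [qfun]

lemma qfun_hasDerivAt (p : Polynomial ℝ) (t : ℝ) : HasDerivAt (qfun p) (p.eval t) t := by
  have h : ∀ k ∈ p.support, HasDerivAt (fun t : ℝ => p.coeff k / (k+1) * t^(k+1))
      (p.coeff k * t^k) t := by
    intro k _
    have h1 : HasDerivAt (fun t : ℝ => t^(k+1)) (((k:ℝ)+1) * t^k) t := by
      simpa using hasDerivAt_pow (k+1) t
    have h2 := h1.const_mul (p.coeff k / ((k:ℝ)+1))
    convert h2 using 1 <;> try rfl
    have : ((k:ℝ)+1) ≠ 0 := by positivity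
    field_simp
  have hsum := HasDerivAt.fun_sum h
  have he : p.eval t = ∑ k ∈ p.support, p.coeff k * t^k := by
    rw [Polynomial.eval_eq_sum, Polynomial.sum_def]
  rw [he]
  exact hsum

variable [FiniteDimensional ℝ A]

lemma exists_poly_approx (γ : ℝ → A) (hγ : ContDiff ℝ 1 γ) (hclosed : γ 0 = γ 1)
    {ε : ℝ} (hε : 0 < ε) :
    ∃ q : ℝ → A, ContDiff ℝ (⊤ : ℕ∞) q ∧ q 0 = q 1 ∧
      (∀ t ∈ Icc (0:ℝ) 1, ‖q t - γ t‖ ≤ ε) ∧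
      (∀ t ∈ Icc (0:ℝ) 1, ‖deriv q t - deriv γ t‖ ≤ ε) := by
  classical
  set d := Module.finrank ℝ A
  set b := Module.finBasis ℝ A
  set C : ℝ := ∑ i, ‖b i‖ with hC
  have hC0 : 0 ≤ C := Finset.sum_nonneg fun i _ => norm_nonneg _
  set ε₁ : ℝ := ε / (2 * (C + 1)) with hε₁
  have hε₁0 : 0 < ε₁ := by positivity
  have hdc : Continuous (deriv γ) := hγ.continuous_deriv le_rfl
  -- coordinates of deriv γ
  set c : Fin d → ℝ → ℝ := fun i t => b.repr (deriv γ t) i with hc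
  have hccont : ∀ i, Continuous (c i) := by
    intro i
    have h1 : Continuous fun x : A => b.repr x i :=
      (LinearMap.continuous_of_finiteDimensional
        ((Finsupp.lapply i).comp (b.repr : A ≃ₗ[ℝ] _).toLinearMap))
    exact h1.comp hdc
  -- choose approximating polynomials
  have hpoly : ∀ i : Fin d, ∃ p : Polynomial ℝ, ∀ t ∈ Icc (0:ℝ) 1,
      |p.eval t - c i t| < ε₁ := fun i =>
    exists_polynomial_near_of_continuousOn 0 1 (c i) (hccont i).continuousOn ε₁ hε₁0
  choose p hp using hpoly
  set P : ℝ → A := fun t => ∑ i, (p i).eval t • b i with hP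
  have hPcont : Continuous P := by
    refine continuous_finset_sum _ fun i _ => ?_
    exact ((p i).continuous).smul continuous_const
  have hPapp : ∀ t ∈ Icc (0:ℝ) 1, ‖P t - deriv γ t‖ ≤ ε₁ * C := by
    intro t ht
    have hrepr : deriv γ t = ∑ i, c i t • b i := (b.sum_repr (deriv γ t)).symm
    rw [hP, hrepr, ← Finset.sum_sub_distrib]
    refine le_trans (norm_sum_le _ _) ?_
    rw [hC, Finset.mul_sum]
    refine Finset.sum_le_sum fun i _ => ?_
    rw [← sub_smul, norm_smul, Real.norm_eq_abs]
    exact mul_le_mul_of_nonneg_right (hp i t ht).le (norm_nonneg _)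
  set Q : ℝ → A := fun t => ∑ i, qfun (p i) t • b i with hQ
  have hQd : ∀ t, HasDerivAt Q (P t) t := fun t =>
    HasDerivAt.fun_sum fun i _ => (qfun_hasDerivAt (p i) t).smul_const (b i)
  have hQ0 : Q 0 = 0 := by simp [hQ, qfun_zero]
  set q : ℝ → A := fun t => γ 0 + Q t - t • Q 1 with hq
  have hqd : ∀ t, HasDerivAt q (P t - Q 1) t := by
    intro t
    have h1 : HasDerivAt (fun t : ℝ => γ 0 + Q t) (P t) t := (hQd t).const_add (γ 0)
    have h2 : HasDerivAt (fun t : ℝ => t • Q 1) (Q 1) t := by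
      simpa using (hasDerivAt_id t).smul_const (Q 1)
    exact h1.sub h2
  have hderivq : deriv q = fun t => P t - Q 1 := funext fun t => (hqd t).deriv
  have hqsmooth : ContDiff ℝ (⊤ : ℕ∞) q := by
    refine ContDiff.sub ?_ (contDiff_id.smul contDiff_const)
    exact contDiff_const.add (ContDiff.sum fun i _ => (qfun_contDiff (p i)).smul contDiff_const)
  -- FTC facts
  have hγd : ∀ t ∈ uIcc (0:ℝ) 1, HasDerivAt γ (deriv γ t) t := fun t _ =>
    ((hγ.differentiable one_ne_zero) t).hasDerivAt
  have hint1 : (∫ t in (0:ℝ)..1, deriv γ t) = γ 1 - γ 0 :=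
    intervalIntegral.integral_deriv_eq_sub (fun t _ => (hγ.differentiable one_ne_zero) t)
      (hdc.intervalIntegrable _ _)
  have hint2 : (∫ t in (0:ℝ)..1, P t) = Q 1 := by
    have := intervalIntegral.integral_eq_sub_of_hasDerivAt (f := Q) (a := (0:ℝ)) (b := (1:ℝ))
      (fun t _ => hQd t) (hPcont.intervalIntegrable _ _)
    rw [this, hQ0, sub_zero]
  have hQ1 : ‖Q 1‖ ≤ ε₁ * C := by
    have : Q 1 = ∫ t in (0:ℝ)..1, (P t - deriv γ t) := by
      rw [intervalIntegral.integral_sub (hPcont.intervalIntegrable _ _)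
        (hdc.intervalIntegrable _ _), hint1, hint2, hclosed]
      abel
    rw [this]
    refine le_trans (intervalIntegral.norm_integral_le_of_norm_le_const
      (C := ε₁ * C) ?_) (by norm_num)
    intro t ht
    rw [Set.uIoc_of_le (by norm_num : (0:ℝ) ≤ 1)] at ht
    exact hPapp t ⟨ht.1.le, ht.2⟩
  have hqdbound : ∀ t ∈ Icc (0:ℝ) 1, ‖deriv q t - deriv γ t‖ ≤ 2 * (ε₁ * C) := by
    intro t ht
    rw [hderivq]
    calc ‖P t - Q 1 - deriv γ t‖ = ‖(P t - deriv γ t) + (- Q 1)‖ := by ring_nf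
    _ ≤ ‖P t - deriv γ t‖ + ‖Q 1‖ := by
        refine le_trans (norm_add_le _ _) ?_
        rw [norm_neg]
    _ ≤ ε₁ * C + ε₁ * C := add_le_add (hPapp t ht) hQ1
    _ = 2 * (ε₁ * C) := by ring
  have hq0 : q 0 = γ 0 := by simp [hq, hQ0]
  have hqbound : ∀ t ∈ Icc (0:ℝ) 1, ‖q t - γ t‖ ≤ 2 * (ε₁ * C) := by
    intro t ht
    have e1 : q t - q 0 = ∫ s in (0:ℝ)..t, deriv q s := by
      rw [hderivq]
      exact (intervalIntegral.integral_eq_sub_of_hasDerivAt (fun s _ => hqd s)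
        ((hPcont.sub continuous_const).intervalIntegrable _ _)).symm
    have e2 : γ t - γ 0 = ∫ s in (0:ℝ)..t, deriv γ s := by
      exact (intervalIntegral.integral_eq_sub_of_hasDerivAt
        (fun s _ => ((hγ.differentiable one_ne_zero) s).hasDerivAt)
        (hdc.intervalIntegrable _ _)).symm
    have e3 : q t - γ t = ∫ s in (0:ℝ)..t, (deriv q s - deriv γ s) := by
      rw [intervalIntegral.integral_sub
        ((by rw [hderivq]; exact (hPcont.sub continuous_const).intervalIntegrable _ _ :
          IntervalIntegrable (deriv q) MeasureTheory.volume 0 t))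
        (hdc.intervalIntegrable _ _), ← e1, ← e2, hq0]
      abel
    rw [e3]
    refine le_trans (intervalIntegral.norm_integral_le_of_norm_le_const
      (C := 2 * (ε₁ * C)) ?_) ?_
    · intro s hs
      rw [Set.uIoc_of_le ht.1] at hs
      exact hqdbound s ⟨hs.1.le, le_trans hs.2 ht.2⟩
    · have habs : |t - 0| ≤ 1 := by
        rw [sub_zero, abs_of_nonneg ht.1]; exact ht.2
      have h2 : (0:ℝ) ≤ 2 * (ε₁ * C) := by positivity
      nlinarith [mul_le_mul_of_nonneg_left habs h2]
  have hfinal : 2 * (ε₁ * C) ≤ ε := by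
    rw [hε₁]
    rw [show 2 * (ε / (2 * (C+1)) * C) = ε * (C / (C+1)) by field_simp]
    have hdiv : C / (C + 1) ≤ 1 := by
      rw [div_le_one (by positivity)]; linarith
    nlinarith
  have hq1 : q 1 = γ 0 := by simp [hq]
  refine ⟨q, hqsmooth, by rw [hq0, hq1], 
    fun t ht => le_trans (hqbound t ht) hfinal,
    fun t ht => le_trans (hqdbound t ht) hfinal⟩

end Approx

section Key

variable [FiniteDimensional ℝ A] {U : Set A} {f : A → A}

lemma key_c1 (hU : IsOpen U) (hf : ContinuousOn f U)
    (H : ∀ γ : ℝ → A, ContDiff ℝ (⊤ : ℕ∞) γ → (∀ t ∈ Icc (0:ℝ) 1, γ t ∈ U) → γ 0 = γ 1 →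
      (∫ t in (0:ℝ)..1, f (γ t) * deriv γ t) = 0)
    (γ : ℝ → A) (hγ : ContDiff ℝ 1 γ) (hmem : ∀ t ∈ Icc (0:ℝ) 1, γ t ∈ U)
    (hcl : γ 0 = γ 1) :
    (∫ t in (0:ℝ)..1, f (γ t) * deriv γ t) = 0 := by
  haveI : ProperSpace A := FiniteDimensional.proper ℝ A
  have hK : IsCompact (γ '' Icc 0 1) := isCompact_Icc.image hγ.continuous
  have hKU : γ '' Icc 0 1 ⊆ U := by
    rintro y ⟨t, ht, rfl⟩; exact hmem t ht
  obtain ⟨ε₀, hε₀, hthick⟩ := hK.exists_cthickening_subset_open hU hKU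
  set T := Metric.cthickening ε₀ (γ '' Icc 0 1) with hT
  have hTcomp : IsCompact T := hK.cthickening
  have hfT : ContinuousOn f T := hf.mono hthick
  have hγT : ∀ t ∈ Icc (0:ℝ) 1, γ t ∈ T :=
    fun t ht => Metric.self_subset_cthickening _ ⟨t, ht, rfl⟩
  have hfu := hTcomp.uniformContinuousOn_of_continuous hfT
  obtain ⟨Mf, hMf⟩ := hTcomp.exists_bound_of_continuousOn hfT
  have hMf0 : 0 ≤ Mf := le_trans (norm_nonneg _) (hMf _ (hγT 0 (by norm_num)))
  obtain ⟨Mg, hMg⟩ := (isCompact_Icc (a := (0:ℝ)) (b := 1)).exists_bound_of_continuousOn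
    (hγ.continuous_deriv le_rfl).continuousOn
  have hMg0 : 0 ≤ Mg := le_trans (norm_nonneg _) (hMg 0 (by norm_num))
  have hcont_int : ContinuousOn (fun t => f (γ t) * deriv γ t) (Icc (0:ℝ) 1) :=
    (hf.comp hγ.continuous.continuousOn hmem).mul
      (hγ.continuous_deriv le_rfl).continuousOn
  have main : ∀ δ > (0:ℝ), ‖∫ t in (0:ℝ)..1, f (γ t) * deriv γ t‖ ≤ δ := by
    intro δ hδ
    obtain ⟨η, hη, hηf⟩ := Metric.uniformContinuousOn_iff.1 hfu
      (δ / (2 * (Mg + 1))) (by positivity)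
    set ε₁ : ℝ := min (min ε₀ η) (δ / (2 * (Mf + 1))) with hε₁
    have hε₁0 : 0 < ε₁ := lt_min (lt_min hε₀ hη) (by positivity)
    obtain ⟨q, hq, hqcl, hqb, hqdb⟩ := exists_poly_approx γ hγ hcl (half_pos hε₁0)
    have hqT : ∀ t ∈ Icc (0:ℝ) 1, q t ∈ T := by
      intro t ht
      refine Metric.mem_cthickening_of_dist_le (q t) (γ t) _ _ ⟨t, ht, rfl⟩ ?_
      rw [dist_eq_norm]
      have := hqb t ht
      have h1 : ε₁ ≤ ε₀ := le_trans (min_le_left _ _) (min_le_left _ _)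
      linarith
    have hqmem : ∀ t ∈ Icc (0:ℝ) 1, q t ∈ U := fun t ht => hthick (hqT t ht)
    have hzero := H q hq hqmem hqcl
    have hq1 : ContDiff ℝ 1 q := hq.of_le (by exact_mod_cast le_top)
    have hqc : Continuous q := hq1.continuous
    have hqdc : Continuous (deriv q) := hq1.continuous_deriv le_rfl
    have hcont_intq : ContinuousOn (fun t => f (q t) * deriv q t) (Icc (0:ℝ) 1) :=
      (hf.comp hqc.continuousOn hqmem).mul hqdc.continuousOn
    have hii1 : IntervalIntegrable (fun t => f (γ t) * deriv γ t)
        MeasureTheory.volume 0 1 := by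
      apply ContinuousOn.intervalIntegrable
      rwa [Set.uIcc_of_le (by norm_num : (0:ℝ) ≤ 1)]
    have hii2 : IntervalIntegrable (fun t => f (q t) * deriv q t)
        MeasureTheory.volume 0 1 := by
      apply ContinuousOn.intervalIntegrable
      rwa [Set.uIcc_of_le (by norm_num : (0:ℝ) ≤ 1)]
    have hdiffeq : (∫ t in (0:ℝ)..1, f (γ t) * deriv γ t)
        = ∫ t in (0:ℝ)..1, (f (γ t) * deriv γ t - f (q t) * deriv q t) := by
      rw [intervalIntegral.integral_sub hii1 hii2, hzero, sub_zero]
    rw [hdiffeq]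
    refine le_trans (intervalIntegral.norm_integral_le_of_norm_le_const (C := δ) ?_)
      (by norm_num)
    intro t ht
    rw [Set.uIoc_of_le (by norm_num : (0:ℝ) ≤ 1)] at ht
    have htI : t ∈ Icc (0:ℝ) 1 := ⟨ht.1.le, ht.2⟩
    have hdistq : dist (q t) (γ t) < η := by
      rw [dist_eq_norm]
      have := hqb t htI
      have h1 : ε₁ ≤ η := le_trans (min_le_left _ _) (min_le_right _ _)
      linarith
    have hfq : ‖f (q t) - f (γ t)‖ < δ / (2 * (Mg + 1)) := by
      have := hηf (q t) (hqT t htI) (γ t) (hγT t htI) hdistq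
      rwa [dist_eq_norm] at this
    have hMfq : ‖f (q t)‖ ≤ Mf := hMf _ (hqT t htI)
    have hMgt : ‖deriv γ t‖ ≤ Mg := hMg t htI
    have hqd : ‖deriv q t - deriv γ t‖ ≤ ε₁ / 2 := hqdb t htI
    have decomp : f (γ t) * deriv γ t - f (q t) * deriv q t
        = f (q t) * (deriv γ t - deriv q t) + (f (γ t) - f (q t)) * deriv γ t := by
      ring
    rw [decomp]
    have hε₁δ : ε₁ ≤ δ / (2 * (Mf + 1)) := min_le_right _ _
    calc ‖f (q t) * (deriv γ t - deriv q t) + (f (γ t) - f (q t)) * deriv γ t‖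
        ≤ ‖f (q t) * (deriv γ t - deriv q t)‖ + ‖(f (γ t) - f (q t)) * deriv γ t‖ :=
          norm_add_le _ _
      _ ≤ ‖f (q t)‖ * ‖deriv γ t - deriv q t‖ + ‖f (γ t) - f (q t)‖ * ‖deriv γ t‖ :=
          add_le_add (norm_mul_le _ _) (norm_mul_le _ _)
      _ ≤ Mf * (ε₁ / 2) + (δ / (2 * (Mg + 1))) * Mg := by
          refine add_le_add (mul_le_mul hMfq ?_ (norm_nonneg _) hMf0) ?_
          · rwa [norm_sub_rev]
          · refine mul_le_mul ?_ hMgt (norm_nonneg _) (by positivity)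
            rw [norm_sub_rev]; exact hfq.le
      _ ≤ δ := by
          have h1 : Mf * (ε₁ / 2) ≤ δ / 2 := by
            have h2 : Mf * (ε₁ / 2) ≤ Mf * (δ / (2 * (Mf + 1)) / 2) := by
              refine mul_le_mul_of_nonneg_left (by linarith) hMf0
            have h3 : Mf * (δ / (2 * (Mf + 1)) / 2) ≤ δ / 2 := by
              rw [show Mf * (δ / (2 * (Mf + 1)) / 2) = (δ / 2) * (Mf / (2 * (Mf + 1))) by ring]
              have h4 : Mf / (2 * (Mf + 1)) ≤ 1 := by
                rw [div_le_one (by positivity)]; linarith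
              nlinarith
            linarith
          have h5 : (δ / (2 * (Mg + 1))) * Mg ≤ δ / 2 := by
            rw [show (δ / (2 * (Mg + 1))) * Mg = (δ / 2) * (Mg / (Mg + 1)) by field_simp]
            have h6 : Mg / (Mg + 1) ≤ 1 := by
              rw [div_le_one (by positivity)]; linarith
            nlinarith
          linarith
  by_contra hne
  have hpos : 0 < ‖∫ t in (0:ℝ)..1, f (γ t) * deriv γ t‖ := by
    simpa [norm_pos_iff] using hne
  have := main (‖∫ t in (0:ℝ)..1, f (γ t) * deriv γ t‖ / 2) (by positivity)
  linarith

end Key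

end AContPrim

open Set

/-- A continuous function `f : U → A` on an open simply connected `U ⊆ A` has vanishing curve
integrals `∫_γ f dx` over all smooth closed curves in `U` if and only if it admits an
`A`-differentiable `C¹` primitive `g` with `Dg(b)(x) = x · f(b)`. -/
theorem aContinuous_iff_primitive
    (𝕂 : Type*) [RCLike 𝕂]
    (A : Type*) [NormedCommRing A] [NormedAlgebra 𝕂 A] [FiniteDimensional 𝕂 A]
    [NormedSpace ℝ A] [IsScalarTower ℝ 𝕂 A]
    (U : Set A) (hU : IsOpen U) (hUsc : SimplyConnectedSpace U)
    (f : A → A) (hf : ContinuousOn f U) :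
    (∀ γ : ℝ → A, ContDiff ℝ (⊤ : ℕ∞) γ → (∀ t ∈ Icc (0:ℝ) 1, γ t ∈ U) → γ 0 = γ 1 →
        ∫ t in (0:ℝ)..1, f (γ t) * deriv γ t = 0)
    ↔ ∃ g : A → A, ContDiffOn 𝕂 1 g U ∧ ADiffOn 𝕂 A g U ∧
        ∀ b ∈ U, ∀ x : A, fderiv 𝕂 g b x = x * f b := by
  classical
  haveI : CompleteSpace A := FiniteDimensional.complete 𝕂 A
  haveI : IsScalarTower ℝ A A := ⟨fun r x y => by
    rw [smul_eq_mul, smul_eq_mul, ← smul_one_smul 𝕂 r x, smul_mul_assoc, smul_one_smul]⟩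
  haveI : SMulCommClass ℝ A A := ⟨fun r x y => by
    rw [smul_eq_mul, smul_eq_mul]
    conv_lhs => rw [← smul_one_smul 𝕂 r (x * y)]
    rw [← mul_smul_comm, smul_one_smul]⟩
  haveI : FiniteDimensional ℝ A := Module.Finite.trans 𝕂 A
  constructor
  · intro H
    have H1 : ∀ γ : ℝ → A, ContDiff ℝ 1 γ → (∀ t ∈ Icc (0:ℝ) 1, γ t ∈ U) → γ 0 = γ 1 →
        (∫ t in (0:ℝ)..1, f (γ t) * deriv γ t) = 0 :=
      fun γ hγ hmem hcl => AContPrim.key_c1 hU hf H γ hγ hmem hcl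
    haveI := hUsc
    haveI hpcs : PathConnectedSpace U := inferInstance
    have hpc : IsPathConnected U := isPathConnected_iff_pathConnectedSpace.2 hpcs
    have hconn : IsPreconnected U := hpc.isConnected.isPreconnected
    obtain ⟨b₀, hb₀, -⟩ := hpc
    have hchainex : ∀ b ∈ U, AContPrim.HasChainTo U b₀ b := fun b hb =>
      AContPrim.exists_chain hU hconn hb₀ hb
    set g := AContPrim.primF f U b₀ with hg
    have hasF : ∀ b ∈ U, HasFDerivAt g ((ContinuousLinearMap.mul 𝕂 A).flip (f b)) b :=
      fun b hb => AContPrim.primF_hasFDerivAt 𝕂 hU hf H1 hb (hchainex b hb)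
    have hfd : ∀ b ∈ U, fderiv 𝕂 g b = (ContinuousLinearMap.mul 𝕂 A).flip (f b) :=
      fun b hb => (hasF b hb).fderiv
    have happly : ∀ b ∈ U, ∀ x : A, fderiv 𝕂 g b x = x * f b := by
      intro b hb x
      rw [hfd b hb]
      simp [ContinuousLinearMap.flip_apply]
      exact mul_comm _ _
    refine ⟨g, ?_, ?_, happly⟩
    · have hdiff : DifferentiableOn 𝕂 g U := fun b hb =>
        ((hasF b hb).differentiableAt).differentiableWithinAt
      have hcont0 : ContDiffOn 𝕂 0 (fderiv 𝕂 g) U := by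
        rw [contDiffOn_zero]
        refine ContinuousOn.congr
          (((ContinuousLinearMap.mul 𝕂 A).flip.continuous.comp_continuousOn hf)) ?_
        intro b hb
        exact hfd b hb
      have h1 : ContDiffOn 𝕂 ((0:ℕ) + 1) g U :=
        (contDiffOn_succ_iff_fderiv_of_isOpen hU).2
          ⟨hdiff, by simp, by exact_mod_cast hcont0⟩
      exact_mod_cast h1
    · intro b hb
      refine ⟨(hasF b hb).differentiableAt, fun a y => ?_⟩
      rw [happly b hb, happly b hb, smul_eq_mul, smul_eq_mul, mul_assoc]
  · rintro ⟨g, hg1, hgA, hgd⟩ γ hγ hmem hcl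
    have hγc : Continuous γ := hγ.continuous
    have hγdc : Continuous (deriv γ) := hγ.continuous_deriv (by exact_mod_cast le_top)
    have hd : ∀ t ∈ uIcc (0:ℝ) 1, HasDerivAt (fun s => g (γ s)) (f (γ t) * deriv γ t) t := by
      intro t ht
      rw [uIcc_of_le (by norm_num : (0:ℝ) ≤ 1)] at ht
      have hγt : γ t ∈ U := hmem t ht
      have hF : HasFDerivAt g (fderiv 𝕂 g (γ t)) (γ t) := ((hgA _ hγt).1).hasFDerivAt
      have hFR := hF.restrictScalars ℝ
      have hγd : HasDerivAt γ (deriv γ t) t :=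
        ((hγ.differentiable (by simp)) t).hasDerivAt
      have hcomp := hFR.comp_hasDerivAt t hγd
      have : ((fderiv 𝕂 g (γ t)).restrictScalars ℝ) (deriv γ t) = f (γ t) * deriv γ t := by
        have h1 : ((fderiv 𝕂 g (γ t)).restrictScalars ℝ) (deriv γ t)
            = fderiv 𝕂 g (γ t) (deriv γ t) := rfl
        rw [h1, hgd _ hγt, mul_comm]
      rw [this] at hcomp
      exact hcomp
    have hint : IntervalIntegrable (fun t => f (γ t) * deriv γ t)
        MeasureTheory.volume 0 1 := by
      apply ContinuousOn.intervalIntegrable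
      rw [uIcc_of_le (by norm_num : (0:ℝ) ≤ 1)]
      exact (hf.comp hγc.continuousOn hmem).mul hγdc.continuousOn
    rw [intervalIntegral.integral_eq_sub_of_hasDerivAt hd hint, hcl, sub_self]
end

section
/- Let e₁,…,e_m ∈ A be idempotents with e_i · e_j = 0 for i ≠ j and e₁ + ⋯ + e_m = 1. Let B be a finitely generated A-module, let U ⊆ B be open and convex, and let f : U → B be A-differentiable. Then for each i ∈ {1,…,m} the map x ↦ e_i • f(x) is A-differentiable on U and depends only on e_i • x: for all x, y ∈ U with e_i • x = e_i • y one has e_i • f(x) = e_i • f(y). Consequently f(x) = ∑_{i=1}^m g_i(e_i • x) for functions g_i defined on the set {e_i • x : x ∈ U}. -/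
/-!
If `c • x = c • y`, then along the segment from `x` to `y` the derivative of `c • f` in the
direction `y - x` is `c • Df(z)(y - x) = Df(z)(c • (y - x)) = 0` by `A`-linearity, so `c • f`
takes the same value at `x` and `y`. Since `f = ∑ i, e i • f`, each summand factors through
`x ↦ e i • x`, which gives the functions `g i`.
-/

open Set

theorem eq_of_fderiv_apply_sub_eq_zero_on_segment {𝕜 E F : Type*} [RCLike 𝕜]
    [NormedAddCommGroup E] [NormedSpace ℝ E] [NormedSpace 𝕜 E] [IsScalarTower ℝ 𝕜 E]
    [NormedAddCommGroup F] [NormedSpace 𝕜 F] {f : E → F} {x y : E}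
    (hf : ∀ z ∈ segment ℝ x y, DifferentiableAt 𝕜 f z)
    (hf' : ∀ z ∈ segment ℝ x y, fderiv 𝕜 f z (y - x) = 0) : f x = f y := by
  let : NormedSpace ℝ F := .restrictScalars ℝ 𝕜 F
  set g : ℝ → E := fun t => AffineMap.lineMap x y t
  have hg : MapsTo g (Icc 0 1) (segment ℝ x y) :=
    (convex_segment x y).mapsTo_lineMap (left_mem_segment ℝ x y) (right_mem_segment ℝ x y)
  have hderiv : ∀ t ∈ Icc (0 : ℝ) 1, HasDerivWithinAt (f ∘ g) 0 (Icc 0 1) t := fun t ht => by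
    simpa [hf' _ (hg ht)] using ((hf _ (hg ht)).hasFDerivAt.restrictScalars ℝ).comp_hasDerivWithinAt
      t AffineMap.hasDerivWithinAt_lineMap
  simpa [g] using (constant_of_has_deriv_right_zero (fun t ht => (hderiv t ht).continuousWithinAt)
    (fun t ht => (hderiv t (Ico_subset_Icc_self ht)).mono_of_mem_nhdsWithin
      (Icc_mem_nhdsGE_of_mem ht)) 1 (by simp)).symm

theorem continuousConstSMul_of_finiteDimensional (𝕜 : Type*) {R M : Type*}
    [NontriviallyNormedField 𝕜] [CompleteSpace 𝕜] [NormedAddCommGroup M] [NormedSpace 𝕜 M]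
    [FiniteDimensional 𝕜 M] [DistribSMul R M] [SMulCommClass R 𝕜 M] : ContinuousConstSMul R M :=
  ⟨fun c => (DistribSMul.toLinearMap 𝕜 M c).continuous_of_finiteDimensional⟩

namespace ADiffOn

variable {𝕂 A B C : Type*} [RCLike 𝕂] [NormedCommRing A] [NormedAlgebra 𝕂 A]
  [NormedAddCommGroup B] [NormedSpace 𝕂 B] [Module A B]
  [NormedAddCommGroup C] [NormedSpace 𝕂 C] [Module A C] [SMulCommClass 𝕂 A C]
  [ContinuousConstSMul A C] {f : B → C} {U : Set B}

theorem const_smul (hf : ADiffOn 𝕂 A f U) (c : A) : ADiffOn 𝕂 A (fun x => c • f x) U := by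
  intro x hx
  obtain ⟨hdiff, hlin⟩ := hf x hx
  refine ⟨hdiff.const_smul c, fun a y => ?_⟩
  rw [fderiv_fun_const_smul hdiff, smul_apply, smul_apply, hlin, smul_comm]

theorem smul_apply_eq_of_smul_eq [NormedSpace ℝ B] [IsScalarTower ℝ 𝕂 B]
    (hf : ADiffOn 𝕂 A f U) (hU : Convex ℝ U) (c : A) {x y : B} (hx : x ∈ U) (hy : y ∈ U)
    (hxy : c • x = c • y) : c • f x = c • f y := by
  have hseg := hU.segment_subset hx hy
  refine eq_of_fderiv_apply_sub_eq_zero_on_segment (f := fun x => c • f x)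
    (fun z hz => (hf z (hseg hz)).1.const_smul c) fun z hz => ?_
  obtain ⟨hdiff, hlin⟩ := hf z (hseg hz)
  rw [fderiv_fun_const_smul hdiff, smul_apply, ← hlin, smul_sub, hxy, sub_self, map_zero]

end ADiffOn

theorem exists_eq_sum_comp_smul {ι M N R : Type*} [Fintype ι] [Semiring R] [SMul R M]
    [AddCommMonoid N] [Module R N] (e : ι → R) (he : ∑ i, e i = 1) {f : M → N} {U : Set M}
    (hf : ∀ i, ∀ x ∈ U, ∀ y ∈ U, e i • x = e i • y → e i • f x = e i • f y) :
    ∃ g : ι → M → N, ∀ x ∈ U, f x = ∑ i, g i (e i • x) := by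
  have hfactor : ∀ i,
      Function.FactorsThrough (fun x : U => e i • f x) (fun x : U => e i • (x : M)) :=
    fun i x y hxy => hf i x x.2 y y.2 hxy
  refine ⟨fun i => Function.extend (fun x : U => e i • (x : M)) (fun x : U => e i • f x) 0,
    fun x hx => ?_⟩
  simp only [(hfactor _).extend_apply 0 ⟨x, hx⟩]
  rw [← Finset.sum_smul, he, one_smul]

theorem aDiff_splitting_general
    (𝕂 : Type*) [RCLike 𝕂]
    (A : Type*) [NormedCommRing A] [NormedAlgebra 𝕂 A] [FiniteDimensional 𝕂 A]
    (B : Type*) [NormedAddCommGroup B] [NormedSpace 𝕂 B] [Module A B]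
    [IsScalarTower 𝕂 A B] [Module.Finite A B]
    [NormedSpace ℝ B] [IsScalarTower ℝ 𝕂 B]
    (m : ℕ) (e : Fin m → A)
    (hsum : ∑ i, e i = 1)
    (U : Set B) (hconv : Convex ℝ U)
    (f : B → B) (hf : ADiffOn 𝕂 A f U) :
    (∀ i : Fin m,
      ADiffOn 𝕂 A (fun x => e i • f x) U ∧
      ∀ x ∈ U, ∀ y ∈ U, e i • x = e i • y → e i • f x = e i • f y) ∧
    ∃ g : Fin m → B → B, ∀ x ∈ U, f x = ∑ i, g i (e i • x) := by
  have : FiniteDimensional 𝕂 B := Module.Finite.trans A B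
  have : ContinuousConstSMul A B := continuousConstSMul_of_finiteDimensional 𝕂
  have hdep : ∀ i, ∀ x ∈ U, ∀ y ∈ U, e i • x = e i • y → e i • f x = e i • f y :=
    fun i _ hx _ hy => hf.smul_apply_eq_of_smul_eq hconv (e i) hx hy
  exact ⟨fun i => ⟨hf.const_smul (e i), hdep i⟩, exists_eq_sum_comp_smul e hsum hdep⟩

/-- Splitting of an `A`-differentiable function along a decomposition of `A` by orthogonal
idempotents `e₁ + ⋯ + e_m = 1`: each `e_i • f` is `A`-differentiable and depends only on
`e_i • x`; consequently `f(x) = ∑ i, g_i (e_i • x)`. -/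
theorem aDiff_splitting
    (𝕂 : Type*) [RCLike 𝕂]
    (A : Type*) [NormedCommRing A] [NormedAlgebra 𝕂 A] [FiniteDimensional 𝕂 A]
    (B : Type*) [NormedAddCommGroup B] [NormedSpace 𝕂 B] [Module A B]
    [IsScalarTower 𝕂 A B] [Module.Finite A B]
    [NormedSpace ℝ B] [IsScalarTower ℝ 𝕂 B]
    (m : ℕ) (e : Fin m → A)
    (hidem : ∀ i, e i * e i = e i)
    (horth : ∀ i j, i ≠ j → e i * e j = 0)
    (hsum : ∑ i, e i = 1)
    (U : Set B) (hU : IsOpen U) (hconv : Convex ℝ U)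
    (f : B → B) (hf : ADiffOn 𝕂 A f U) :
    (∀ i : Fin m,
      ADiffOn 𝕂 A (fun x => e i • f x) U ∧
      ∀ x ∈ U, ∀ y ∈ U, e i • x = e i • y → e i • f x = e i • f y) ∧
    ∃ g : Fin m → B → B, ∀ x ∈ U, f x = ∑ i, g i (e i • x) :=
  aDiff_splitting_general 𝕂 A B m e hsum U hconv f hf
end

section
/- Let U ⊆ B be open, let f : U → A be of class C² and A-differentiable, let ψ : A → 𝕂 be a 𝕂-linear functional, and set v = ψ ∘ f. Then the second Fréchet derivative of v satisfies D²v(b)(a • x, y) = D²v(b)(x, a • y) for all b ∈ U, x, y ∈ B and a ∈ A. -/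
/-!
`D²v(b) = ψ ∘ D²f(b)`, and `D²f(b)` is symmetric (Schwarz) and `A`-linear in its second slot,
since differentiating the identity `Df(z)(a • y) = a • Df(z)(y)`, valid near `b`, preserves it.
Symmetry then moves `a` from one slot to the other.
-/

open Set

open Filter Topology

section

variable {𝕂 A B : Type*} [NontriviallyNormedField 𝕂] [NormedRing A] [NormedAlgebra 𝕂 A]
  [NormedAddCommGroup B] [NormedSpace 𝕂 B] [SMul A B]

/-- Left `A`-linearity of `L : B →L[𝕂] A` is the vanishing of the continuous linear functional
`L ↦ L (a • w) - a * L w`; a map into its kernel near `b` has its derivative at `b` in the kernel. -/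
theorem fderiv_fderiv_apply_smul {f : B → A} {b : B}
    (hf : ∀ᶠ z in 𝓝 b, ∀ (a : A) (y : B), fderiv 𝕂 f z (a • y) = a • fderiv 𝕂 f z y)
    (hf' : DifferentiableAt 𝕂 (fderiv 𝕂 f) b) (a : A) (v w : B) :
    fderiv 𝕂 (fderiv 𝕂 f) b v (a • w) = a • fderiv 𝕂 (fderiv 𝕂 f) b v w := by
  let Φ : (B →L[𝕂] A) →L[𝕂] A :=
    ContinuousLinearMap.apply 𝕂 A (a • w) -
      (ContinuousLinearMap.mul 𝕂 A a).comp (ContinuousLinearMap.apply 𝕂 A w)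
  have hΦ_zero : Φ ∘ fderiv 𝕂 f =ᶠ[𝓝 b] fun _ => 0 := by
    filter_upwards [hf] with z hz
    simp [Φ, hz a w, smul_eq_mul]
  have hderiv : Φ.comp (fderiv 𝕂 (fderiv 𝕂 f) b) = 0 :=
    (Φ.hasFDerivAt.comp b hf'.hasFDerivAt).unique
      ((hasFDerivAt_const 0 b).congr_of_eventuallyEq hΦ_zero)
  simpa [Φ, sub_eq_zero] using congr($hderiv v)

end

theorem component_satisfies_generalized_laplace_general
    (𝕂 : Type*) [RCLike 𝕂]
    (A : Type*) [NormedCommRing A] [NormedAlgebra 𝕂 A] [FiniteDimensional 𝕂 A]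
    (B : Type*) [NormedAddCommGroup B] [NormedSpace 𝕂 B] [Module A B]
    (U : Set B) (hU : IsOpen U)
    (f : B → A) (hf : ContDiffOn 𝕂 2 f U) (hfA : ADiffOn 𝕂 A f U)
    (ψ : A →ₗ[𝕂] 𝕂) :
    ∀ b ∈ U, ∀ (a : A) (x y : B),
      iteratedFDeriv 𝕂 2 (fun z => ψ (f z)) b ![a • x, y]
        = iteratedFDeriv 𝕂 2 (fun z => ψ (f z)) b ![x, a • y] := by
  intro b hb a x y
  have hfb : ContDiffAt 𝕂 2 f b := hf.contDiffAt (hU.mem_nhds hb)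
  have hψ (m : Fin 2 → B) :
      iteratedFDeriv 𝕂 2 (fun z => ψ (f z)) b m = ψ (iteratedFDeriv 𝕂 2 f b m) :=
    congr($(ψ.toContinuousLinearMap.iteratedFDeriv_comp_left hfb le_rfl) m)
  have hsymm : IsSymmSndFDerivAt 𝕂 f b := hfb.isSymmSndFDerivAt (by simp)
  have hsmul := fderiv_fderiv_apply_smul
    (eventually_of_mem (hU.mem_nhds hb) fun z hz => (hfA z hz).2)
    ((hfb.fderiv_right le_rfl).differentiableAt one_ne_zero) a
  rw [hψ, hψ, iteratedFDeriv_two_apply, iteratedFDeriv_two_apply]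
  congr 1
  calc fderiv 𝕂 (fderiv 𝕂 f) b (a • x) y = fderiv 𝕂 (fderiv 𝕂 f) b y (a • x) := hsymm _ _
    _ = a • fderiv 𝕂 (fderiv 𝕂 f) b x y := by rw [hsmul, hsymm]
    _ = fderiv 𝕂 (fderiv 𝕂 f) b x (a • y) := (hsmul x y).symm

/-- A component `v = ψ ∘ f` of a `C²` `A`-differentiable function satisfies the generalized
Laplace equations `D²v(b)(a • x, y) = D²v(b)(x, a • y)`. -/
theorem component_satisfies_generalized_laplace
    (𝕂 : Type*) [RCLike 𝕂]
    (A : Type*) [NormedCommRing A] [NormedAlgebra 𝕂 A] [FiniteDimensional 𝕂 A]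
    (B : Type*) [NormedAddCommGroup B] [NormedSpace 𝕂 B] [Module A B]
    [IsScalarTower 𝕂 A B] [Module.Finite A B]
    (U : Set B) (hU : IsOpen U)
    (f : B → A) (hf : ContDiffOn 𝕂 2 f U) (hfA : ADiffOn 𝕂 A f U)
    (ψ : A →ₗ[𝕂] 𝕂) :
    ∀ b ∈ U, ∀ (a : A) (x y : B),
      iteratedFDeriv 𝕂 2 (fun z => ψ (f z)) b ![a • x, y]
        = iteratedFDeriv 𝕂 2 (fun z => ψ (f z)) b ![x, a • y] :=
  component_satisfies_generalized_laplace_general 𝕂 A B U hU f hf hfA ψ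
end

section
/- Let k ≥ 1, let U ⊆ B be open, and let f : U → C be of class C^k on U and A-differentiable. Then for every x ∈ U, every a ∈ A and all v₁, …, v_k ∈ B, the k-th iterated Fréchet derivative satisfies D^k f(x)(a • v₁, v₂, …, v_k) = a • D^k f(x)(v₁, …, v_k); in particular, for fixed v₁,…,v_{k−1} ∈ B the function x ↦ D^{k−1} f(x)(v₁,…,v_{k−1}) is A-differentiable on U. -/
open Set

/-! The second derivative of a `C²` function is symmetric, so the `A`-linearity of `Dg(z)` near
`x`, which after differentiation reads `D²g(x)(y, a • w) = a • D²g(x)(y, w)`, transfers to the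
first slot: `D²g(x)(a • z, y) = a • D²g(x)(z, y)`. Hence `x ↦ Dg(x) y` is `A`-differentiable, and
induction on `n`, with `D^{n+1} f(x) w = D(x ↦ D^n f(x) (tail w))(x) (w 0)`, shows the same for
`x ↦ D^n f(x) w` whenever `n < k`. The case `n = k - 1` gives both claims. -/

open Filter Topology

section

variable {𝕂 : Type*} [RCLike 𝕂]
  {B : Type*} [NormedAddCommGroup B] [NormedSpace 𝕂 B]
  {C : Type*} [NormedAddCommGroup C] [NormedSpace 𝕂 C]

theorem fderiv_clm_apply_const_apply {c : B → B →L[𝕂] C} {x : B} (hc : DifferentiableAt 𝕂 c x)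
    (u y : B) : fderiv 𝕂 (fun z => c z u) x y = fderiv 𝕂 c x y u := by
  simp [fderiv_clm_apply hc (differentiableAt_const u)]

theorem fderiv_fderiv_apply_smul_s16 {R : Type*} [Monoid R] [SMul R B] [DistribMulAction R C]
    [SMulCommClass 𝕂 R C] [ContinuousConstSMul R C] {g : B → C} {x : B} {a : R}
    (hg : DifferentiableAt 𝕂 (fderiv 𝕂 g) x)
    (hga : ∀ᶠ z in 𝓝 x, ∀ w : B, fderiv 𝕂 g z (a • w) = a • fderiv 𝕂 g z w) (y w : B) :
    fderiv 𝕂 (fderiv 𝕂 g) x y (a • w) = a • fderiv 𝕂 (fderiv 𝕂 g) x y w := by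
  have hfun : (fun z => fderiv 𝕂 g z (a • w)) =ᶠ[𝓝 x] fun z => a • fderiv 𝕂 g z w := by
    filter_upwards [hga] with z hz using hz w
  calc fderiv 𝕂 (fderiv 𝕂 g) x y (a • w)
      = fderiv 𝕂 (fun z => fderiv 𝕂 g z (a • w)) x y := (fderiv_clm_apply_const_apply hg _ _).symm
    _ = fderiv 𝕂 (fun z => a • fderiv 𝕂 g z w) x y := by rw [hfun.fderiv_eq]
    _ = a • fderiv 𝕂 (fun z => fderiv 𝕂 g z w) x y := by
      rw [fderiv_fun_const_smul (hg.clm_apply (differentiableAt_const w)),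
        smul_apply]
    _ = a • fderiv 𝕂 (fderiv 𝕂 g) x y w := by rw [fderiv_clm_apply_const_apply hg]

theorem iteratedFDeriv_succ_apply_eq_fderiv {f : B → C} {n : ℕ} {x : B}
    (hf : DifferentiableAt 𝕂 (iteratedFDeriv 𝕂 n f) x) (w : Fin (n + 1) → B) :
    iteratedFDeriv 𝕂 (n + 1) f x w =
      fderiv 𝕂 (fun y => iteratedFDeriv 𝕂 n f y (Fin.tail w)) x (w 0) := by
  rw [iteratedFDeriv_succ_apply_left, fderiv_continuousMultilinear_apply_const_apply hf]

namespace ADiffOn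

variable {A : Type*} [NormedCommRing A] [NormedAlgebra 𝕂 A] [Module A B] [Module A C]
  {U : Set B}

theorem congr {f g : B → C} (hU : IsOpen U) (hf : ADiffOn 𝕂 A f U) (h : EqOn g f U) :
    ADiffOn 𝕂 A g U := by
  intro x hx
  have hfg : g =ᶠ[𝓝 x] f := Filter.eventuallyEq_of_mem (hU.mem_nhds hx) h
  obtain ⟨hd, hlin⟩ := hf x hx
  exact ⟨hd.congr_of_eventuallyEq hfg, by rw [hfg.fderiv_eq]; exact hlin⟩

variable [SMulCommClass 𝕂 A C] [ContinuousConstSMul A C]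

theorem fderiv_apply {g : B → C} (hU : IsOpen U) (hg : ContDiffOn 𝕂 2 g U)
    (hgA : ADiffOn 𝕂 A g U) (y : B) : ADiffOn 𝕂 A (fun x => fderiv 𝕂 g x y) U := by
  intro x hx
  have hgx : ContDiffAt 𝕂 2 g x := hg.contDiffAt (hU.mem_nhds hx)
  have hd : DifferentiableAt 𝕂 (fderiv 𝕂 g) x :=
    (hgx.fderiv_right (m := 1) le_rfl).differentiableAt one_ne_zero
  have hsymm : IsSymmSndFDerivAt 𝕂 g x := hgx.isSymmSndFDerivAt (by simp)
  refine ⟨hd.clm_apply (differentiableAt_const y), fun a z => ?_⟩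
  have hga : ∀ᶠ z in 𝓝 x, ∀ w : B, fderiv 𝕂 g z (a • w) = a • fderiv 𝕂 g z w := by
    filter_upwards [hU.mem_nhds hx] with z hz using (hgA z hz).2 a
  rw [fderiv_clm_apply_const_apply hd, fderiv_clm_apply_const_apply hd, hsymm,
    fderiv_fderiv_apply_smul_s16 hd hga, hsymm]

theorem iteratedFDeriv_apply {f : B → C} {n : ℕ} (hU : IsOpen U)
    (hf : ContDiffOn 𝕂 (n + 1) f U) (hfA : ADiffOn 𝕂 A f U) (w : Fin n → B) :
    ADiffOn 𝕂 A (fun x => iteratedFDeriv 𝕂 n f x w) U := by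
  induction n with
  | zero => exact hfA.congr hU fun x _ => iteratedFDeriv_zero_apply w
  | succ n ih =>
    have hf₂ : ∀ x ∈ U, ContDiffAt 𝕂 2 (iteratedFDeriv 𝕂 n f) x := fun x hx =>
      (hf.contDiffAt (hU.mem_nhds hx)).iteratedFDeriv_right (by norm_cast; omega)
    have hg : ContDiffOn 𝕂 2 (fun x => iteratedFDeriv 𝕂 n f x (Fin.tail w)) U := fun x hx =>
      ((hf₂ x hx).continuousLinearMap_comp
        (ContinuousMultilinearMap.apply 𝕂 (fun _ : Fin n => B) C (Fin.tail w))).contDiffWithinAt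
    have hgA := ih (hf.of_le (by norm_cast; omega)) (Fin.tail w)
    exact (hgA.fderiv_apply hU hg (w 0)).congr hU fun x hx =>
      iteratedFDeriv_succ_apply_eq_fderiv ((hf₂ x hx).differentiableAt two_ne_zero) w

end ADiffOn

end

theorem iteratedFDeriv_aLinear_general
    (𝕂 : Type*) [RCLike 𝕂]
    (A : Type*) [NormedCommRing A] [NormedAlgebra 𝕂 A] [FiniteDimensional 𝕂 A]
    (B : Type*) [NormedAddCommGroup B] [NormedSpace 𝕂 B] [Module A B]
    (C : Type*) [NormedAddCommGroup C] [NormedSpace 𝕂 C] [Module A C]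
    [IsScalarTower 𝕂 A C] [Module.Finite A C]
    (k : ℕ) (hk : 1 ≤ k)
    (U : Set B) (hU : IsOpen U)
    (f : B → C) (hf : ContDiffOn 𝕂 k f U) (hfA : ADiffOn 𝕂 A f U) :
    (∀ x ∈ U, ∀ (a : A) (v : Fin k → B),
      iteratedFDeriv 𝕂 k f x (Function.update v ⟨0, hk⟩ (a • v ⟨0, hk⟩))
        = a • iteratedFDeriv 𝕂 k f x v) ∧
    ∀ w : Fin (k - 1) → B,
      ADiffOn 𝕂 A (fun x => iteratedFDeriv 𝕂 (k - 1) f x w) U := by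
  obtain ⟨m, rfl⟩ : ∃ m, k = m + 1 := ⟨k - 1, by omega⟩
  have : FiniteDimensional 𝕂 C := Module.Finite.trans A C
  have : ContinuousConstSMul A C :=
    ⟨fun a => (DistribSMul.toLinearMap 𝕂 C a).continuous_of_finiteDimensional⟩
  have hf' : ContDiffOn 𝕂 (m + 1) f U := by exact_mod_cast hf
  have hA := fun w => ADiffOn.iteratedFDeriv_apply hU hf' hfA w
  refine ⟨fun x hx a v => ?_, hA⟩
  have hd : DifferentiableAt 𝕂 (iteratedFDeriv 𝕂 m f) x :=
    ((hf.contDiffAt (hU.mem_nhds hx)).iteratedFDeriv_right (m := 1)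
      (by norm_cast; omega)).differentiableAt one_ne_zero
  rw [iteratedFDeriv_succ_apply_eq_fderiv hd, iteratedFDeriv_succ_apply_eq_fderiv hd]
  simpa [Fin.tail_update_zero] using (hA (Fin.tail v) x hx).2 a (v 0)

/-- Higher derivatives of a `C^k` `A`-differentiable function are `A`-multilinear in the first
argument and the `(k-1)`-st derivative, evaluated at fixed vectors, is again `A`-differentiable. -/
theorem iteratedFDeriv_aLinear
    (𝕂 : Type*) [RCLike 𝕂]
    (A : Type*) [NormedCommRing A] [NormedAlgebra 𝕂 A] [FiniteDimensional 𝕂 A]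
    (B : Type*) [NormedAddCommGroup B] [NormedSpace 𝕂 B] [Module A B]
    [IsScalarTower 𝕂 A B] [Module.Finite A B]
    (C : Type*) [NormedAddCommGroup C] [NormedSpace 𝕂 C] [Module A C]
    [IsScalarTower 𝕂 A C] [Module.Finite A C]
    (k : ℕ) (hk : 1 ≤ k)
    (U : Set B) (hU : IsOpen U)
    (f : B → C) (hf : ContDiffOn 𝕂 k f U) (hfA : ADiffOn 𝕂 A f U) :
    (∀ x ∈ U, ∀ (a : A) (v : Fin k → B),
      iteratedFDeriv 𝕂 k f x (Function.update v ⟨0, hk⟩ (a • v ⟨0, hk⟩))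
        = a • iteratedFDeriv 𝕂 k f x v) ∧
    ∀ w : Fin (k - 1) → B,
      ADiffOn 𝕂 A (fun x => iteratedFDeriv 𝕂 (k - 1) f x w) U :=
  iteratedFDeriv_aLinear_general 𝕂 A B C k hk U hU f hf hfA
end

section
/- Let B, C, D be finitely generated A-modules, let π : C → B be a surjective A-linear map, let U ⊆ B be open, and let f : U → D. Then: (i) f is A-differentiable on U if and only if f ∘ π is A-differentiable on π⁻¹(U); (ii) for every k ∈ ℕ, f is of class C^k on U if and only if f ∘ π is of class C^k on π⁻¹(U). -/
/-!
Since `B` is finite-dimensional, `π` has a continuous `𝕂`-linear right inverse `σ`. Then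
`f = (f ∘ π) ∘ σ`, and also `f = (f ∘ π) ∘ (x ↦ c + σ (x - π c))`, whose inner map sends `π c`
to `c`; so differentiability and `C^k` regularity pass between `f` and `f ∘ π` in both
directions. The derivative of `f ∘ π` at `c` is `Df(π c) ∘ π`, and since `π` is `A`-linear and
surjective, it is `A`-linear exactly when `Df(π c)` is.
-/

open Set

theorem forall_map_smul_iff_of_surjective {A B C D : Type*} [SMul A B] [SMul A C] [SMul A D]
    {π : C → B} (hπ : Function.Surjective π) (hπA : ∀ (a : A) z, π (a • z) = a • π z)
    (L : B → D) :
    (∀ (a : A) y, L (a • y) = a • L y) ↔ ∀ (a : A) z, L (π (a • z)) = a • L (π z) := by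
  refine ⟨fun h a z => by rw [hπA, h], fun h a y => ?_⟩
  obtain ⟨z, rfl⟩ := hπ y
  rw [← hπA, h]

section RightInverse

variable {𝕂 : Type*} [NontriviallyNormedField 𝕂] {B C D : Type*} [NormedAddCommGroup B]
  [NormedSpace 𝕂 B] [NormedAddCommGroup C] [NormedSpace 𝕂 C] [NormedAddCommGroup D]
  [NormedSpace 𝕂 D] {π : C →L[𝕂] B} {σ : B →L[𝕂] C} {f : B → D}

theorem differentiableAt_comp_iff_of_rightInverse (hσ : Function.RightInverse σ π) (c : C) :
    DifferentiableAt 𝕂 (f ∘ π) c ↔ DifferentiableAt 𝕂 f (π c) := by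
  refine ⟨fun h => ?_, fun h => h.comp c π.differentiableAt⟩
  have hsection : f = (f ∘ π) ∘ fun x => c + σ (x - π c) := by
    funext x
    simp [hσ _]
  rw [hsection]
  exact DifferentiableAt.comp _ (by simpa using h) (by fun_prop)

theorem contDiffOn_comp_iff_of_rightInverse (hσ : Function.RightInverse σ π)
    {n : WithTop ℕ∞} {U : Set B} :
    ContDiffOn 𝕂 n (f ∘ π) (π ⁻¹' U) ↔ ContDiffOn 𝕂 n f U := by
  refine ⟨fun h => ?_, fun h => h.comp π.contDiff.contDiffOn (mapsTo_preimage _ _)⟩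
  have hsection : f = (f ∘ π) ∘ σ := by
    funext x
    simp [hσ x]
  rw [hsection]
  exact h.comp σ.contDiff.contDiffOn fun x hx => by simpa [hσ x] using hx

end RightInverse

theorem aDiffOn_comp_iff_of_rightInverse {𝕂 : Type*} [RCLike 𝕂] {A : Type*} [NormedCommRing A]
    [NormedAlgebra 𝕂 A] {B C D : Type*} [NormedAddCommGroup B] [NormedSpace 𝕂 B] [Module A B]
    [NormedAddCommGroup C] [NormedSpace 𝕂 C] [Module A C]
    [NormedAddCommGroup D] [NormedSpace 𝕂 D] [Module A D]
    {π : C →L[𝕂] B} {σ : B →L[𝕂] C} {f : B → D}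
    (hπA : ∀ (a : A) (z : C), π (a • z) = a • π z) (hσ : Function.RightInverse σ π) {U : Set B} :
    ADiffOn 𝕂 A (f ∘ π) (π ⁻¹' U) ↔ ADiffOn 𝕂 A f U := by
  have hfderiv (c : C) (hd : DifferentiableAt 𝕂 f (π c)) :
      fderiv 𝕂 (f ∘ π) c = (fderiv 𝕂 f (π c)).comp π := by
    rw [fderiv_comp c hd π.differentiableAt, π.fderiv]
  have hlinear := forall_map_smul_iff_of_surjective (D := D) hσ.surjective hπA
  constructor
  · intro h x hx
    obtain ⟨c, rfl⟩ := hσ.surjective x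
    obtain ⟨hd, hA⟩ := h c hx
    have hdf := (differentiableAt_comp_iff_of_rightInverse hσ c).1 hd
    refine ⟨hdf, (hlinear _).2 ?_⟩
    simpa only [hfderiv c hdf, ContinuousLinearMap.comp_apply] using hA
  · intro h c hc
    obtain ⟨hd, hA⟩ := h (π c) hc
    refine ⟨(differentiableAt_comp_iff_of_rightInverse hσ c).2 hd, ?_⟩
    rw [hfderiv c hd]
    exact (hlinear _).1 hA

theorem aDiff_comp_surjective_iff_general
    (𝕂 : Type*) [RCLike 𝕂]
    (A : Type*) [NormedCommRing A] [NormedAlgebra 𝕂 A] [FiniteDimensional 𝕂 A]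
    (B : Type*) [NormedAddCommGroup B] [NormedSpace 𝕂 B] [Module A B]
    [IsScalarTower 𝕂 A B] [Module.Finite A B]
    (C : Type*) [NormedAddCommGroup C] [NormedSpace 𝕂 C] [Module A C]
    [IsScalarTower 𝕂 A C] [Module.Finite A C]
    (D : Type*) [NormedAddCommGroup D] [NormedSpace 𝕂 D] [Module A D]
    (π : C →ₗ[A] B) (hπ : Function.Surjective π)
    (U : Set B) (f : B → D) :
    (ADiffOn 𝕂 A f U ↔ ADiffOn 𝕂 A (f ∘ π) (⇑π ⁻¹' U)) ∧
    ∀ k : ℕ, (ContDiffOn 𝕂 k f U ↔ ContDiffOn 𝕂 k (f ∘ π) (⇑π ⁻¹' U)) := by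
  have : FiniteDimensional 𝕂 B := Module.Finite.trans A B
  have : FiniteDimensional 𝕂 C := Module.Finite.trans A C
  let πc : C →L[𝕂] B := LinearMap.toContinuousLinearMap (π.restrictScalars 𝕂)
  obtain ⟨σ, hσ⟩ := πc.exists_rightInverse_of_surjective (LinearMap.range_eq_top.2 hπ)
  have hright : Function.RightInverse σ πc := DFunLike.congr_fun hσ
  exact ⟨(aDiffOn_comp_iff_of_rightInverse π.map_smul hright).symm,
    fun k => (contDiffOn_comp_iff_of_rightInverse hright).symm⟩

/-- For a surjective `A`-linear map `π : C → B` and `f : U → D` on an open `U ⊆ B`, `f` is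
`A`-differentiable (resp. of class `C^k`) on `U` iff `f ∘ π` is `A`-differentiable
(resp. of class `C^k`) on `π⁻¹(U)`. -/
theorem aDiff_comp_surjective_iff
    (𝕂 : Type*) [RCLike 𝕂]
    (A : Type*) [NormedCommRing A] [NormedAlgebra 𝕂 A] [FiniteDimensional 𝕂 A]
    (B : Type*) [NormedAddCommGroup B] [NormedSpace 𝕂 B] [Module A B]
    [IsScalarTower 𝕂 A B] [Module.Finite A B]
    (C : Type*) [NormedAddCommGroup C] [NormedSpace 𝕂 C] [Module A C]
    [IsScalarTower 𝕂 A C] [Module.Finite A C]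
    (D : Type*) [NormedAddCommGroup D] [NormedSpace 𝕂 D] [Module A D]
    [IsScalarTower 𝕂 A D] [Module.Finite A D]
    (π : C →ₗ[A] B) (hπ : Function.Surjective π)
    (U : Set B) (hU : IsOpen U) (f : B → D) :
    (ADiffOn 𝕂 A f U ↔ ADiffOn 𝕂 A (f ∘ π) (⇑π ⁻¹' U)) ∧
    ∀ k : ℕ, (ContDiffOn 𝕂 k f U ↔ ContDiffOn 𝕂 k (f ∘ π) (⇑π ⁻¹' U)) :=
  aDiff_comp_surjective_iff_general 𝕂 A B C D π hπ U f
end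

section
/- Let A be a finite-dimensional commutative unital algebra over 𝕂 (𝕂 = ℝ or ℂ), let I be an ideal of A, let a ∈ A and let k ≥ 1 be a natural number. If there exist x₁, …, x_k ∈ I with x₁ · x₂ ⋯ x_k · a ≠ 0, then there exists v ∈ I with v^k · a ≠ 0. -/
/-!
Inclusion–exclusion over the subsets `U` of `{1, …, k}` gives the polarization identity
`∑_U (-1)^|U| (∑_{i ∉ U} xᵢ)^k = k! · x₁ ⋯ x_k`: expanding each power into monomials
`x_{p 1} ⋯ x_{p k}`, the alternating sum kills every `p` that is not a permutation. Every
`∑_{i ∉ U} xᵢ` lies in `I`, so if all `k`-th powers of elements of `I` annihilated `a`, so would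
`k! · x₁ ⋯ x_k`, and in characteristic zero `x₁ ⋯ x_k` itself.
-/

open Finset Function
open scoped Nat

section Polarization

variable {ι R : Type*} [Fintype ι] [CommRing R]

theorem sum_neg_one_pow_card_smul_sum_compl_pow [DecidableEq ι] (x : ι → R) :
    ∑ U : Finset ι, (-1 : ℤ) ^ #U • (∑ i ∈ Uᶜ, x i) ^ Fintype.card ι
      = (Fintype.card ι)! • ∏ i, x i := by
  have expand (U : Finset ι) : (∑ i ∈ Uᶜ, x i) ^ Fintype.card ι
      = ∑ p ∈ Fintype.piFinset fun _ : ι => Uᶜ, ∏ j, x (p j) := by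
    rw [← card_univ, ← prod_const, prod_univ_sum]
  calc _ = ∑ U : Finset ι, ∑ p ∈ Fintype.piFinset fun _ : ι => Uᶜ,
          (-1 : ℤ) ^ #U • ∏ j, x (p j) := by
        simp_rw [expand, smul_sum]
    _ = ∑ p : ι → ι, ∑ U ∈ (univ.image p)ᶜ.powerset, (-1 : ℤ) ^ #U • ∏ j, x (p j) :=
        sum_comm' fun U p => by
          simp only [mem_univ, Fintype.mem_piFinset, mem_compl, true_and, mem_powerset,
            subset_iff, mem_image, not_exists, and_true]
          grind
    _ = ∑ p : ι → ι, if Bijective p then ∏ j, x (p j) else 0 := by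
        congr! 1 with p
        have hbij : univ.image p = univ ↔ Bijective p := by
          rw [← Finite.surjective_iff_bijective]
          simp [eq_univ_iff_forall, Surjective]
        rw [← sum_smul, sum_powerset_neg_one_pow_card]
        simp only [compl_eq_empty_iff, hbij]
        split_ifs <;> simp
    _ = ∑ σ : Equiv.Perm ι, ∏ j, x (σ j) := by
        rw [← sum_filter, sum_subtype _ (p := Bijective) (by simp)]
        exact Fintype.sum_equiv Equiv.bijectiveEquiv _ _ fun _ => rfl
    _ = _ := by simp [Equiv.prod_comp, Fintype.card_perm]

end Polarization

namespace Ideal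

variable {ι A : Type*} [Fintype ι] [CommRing A] {I : Ideal A} {a : A} {x : ι → A}

theorem factorial_nsmul_prod_mul_eq_zero (ha : ∀ v ∈ I, v ^ Fintype.card ι * a = 0)
    (hx : ∀ i, x i ∈ I) : (Fintype.card ι)! • ((∏ i, x i) * a) = 0 := by
  classical
  rw [← smul_mul_assoc, ← sum_neg_one_pow_card_smul_sum_compl_pow, sum_mul]
  refine sum_eq_zero fun U _ => ?_
  rw [smul_mul_assoc, ha _ (I.sum_mem fun i _ => hx i), smul_zero]

theorem exists_pow_card_mul_ne_zero [IsAddTorsionFree A] (hx : ∀ i, x i ∈ I)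
    (h : (∏ i, x i) * a ≠ 0) : ∃ v ∈ I, v ^ Fintype.card ι * a ≠ 0 := by
  by_contra! ha
  exact h <| (nsmul_eq_zero_iff_right (Nat.factorial_ne_zero _)).1
    (factorial_nsmul_prod_mul_eq_zero ha hx)

end Ideal

theorem exists_pow_mul_ne_zero_general
    (𝕂 : Type*) [RCLike 𝕂]
    (A : Type*) [CommRing A] [Algebra 𝕂 A]
    (I : Ideal A) (a : A) (k : ℕ)
    (x : Fin k → A) (hx : ∀ i, x i ∈ I) (h : (∏ i, x i) * a ≠ 0) :
    ∃ v ∈ I, v ^ k * a ≠ 0 := by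
  have : IsAddTorsionFree A := .of_isTorsionFree 𝕂 A
  simpa using I.exists_pow_card_mul_ne_zero hx h

/-- If a product of `k` elements of an ideal `I` of a finite-dimensional commutative algebra `A`
over `𝕂` does not annihilate `a`, then some `k`-th power `v^k` of an element `v ∈ I` does not
annihilate `a`. -/
theorem exists_pow_mul_ne_zero
    (𝕂 : Type*) [RCLike 𝕂]
    (A : Type*) [CommRing A] [Algebra 𝕂 A] [FiniteDimensional 𝕂 A]
    (I : Ideal A) (a : A) (k : ℕ) (hk : 1 ≤ k)
    (x : Fin k → A) (hx : ∀ i, x i ∈ I) (h : (∏ i, x i) * a ≠ 0) :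
    ∃ v ∈ I, v ^ k * a ≠ 0 :=
  exists_pow_mul_ne_zero_general 𝕂 A I a k x hx h
end
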